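/- arXiv:1401.1652 — 9 statements merged into one kernel-verified Lean document; each statement's English description precedes it below -/
import Mathlib

section
/- Let 0 → H → G → G' → 0 be a short exact sequence of finite abelian ℓ-groups. Write G ≅ ⊕_{i=1}^r ℤ/ℓ^{m_i}ℤ with 0 ≤ m_1 ≤ … ≤ m_r, and H ≅ ⊕_{i=1}^s ℤ/ℓ^{n_i}ℤ with 0 ≤ n_1 ≤ … ≤ n_s (allowing zero exponents). If G' can be generated by r − s elements, then m_i ≤ n_i for all 1 ≤ i ≤ s. -/
/-!
For a finite abelian group `A` let `(ℓ^k A)[ℓ]` be the `ℓ`-torsion of `ℓ^k A`; for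
`A ≅ ⊕ ℤ/ℓ^{a_i}` it has `ℓ^{#{i | k < a_i}}` elements. Modulo `ℓ^k H`, the group `ℓ^k G` is a
quotient of `G'`, hence generated by `r - s` elements, and the `ℓ`-torsion of a `t`-generated
finite group has as many elements as its quotient by `ℓ`, at most `ℓ^t`. So
`#{i | k < m_i} ≤ (r - s) + #{j | k < n_j}` for every `k`, and `k = n_i` contradicts `n_i < m_i`
by monotonicity.
-/

open Finset

namespace AddSubgroup

variable {G G₂ : Type*} [AddCommGroup G] [AddCommGroup G₂]

/-- `(ℓ^k U)[ℓ]`. -/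
def torsionOfMultiples (ℓ k : ℕ) (U : AddSubgroup G) : AddSubgroup G :=
  U.map (nsmulAddMonoidHom (ℓ ^ k)) ⊓ (nsmulAddMonoidHom ℓ).ker

lemma card_eq_card_map_mul_card_inf_ker (S : AddSubgroup G) (f : G →+ G₂) :
    Nat.card S = Nat.card (S.map f) * Nat.card (S ⊓ f.ker : AddSubgroup G) := by
  rw [← (f.domRestrict S).ker.card_mul_index, index_ker, AddMonoidHom.domRestrict_range,
    AddMonoidHom.ker_domRestrict, ← card_map_of_injective S.subtype_injective,
    addSubgroupOf_map_subtype, inf_comm, mul_comm]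

lemma card_inf_ker_nsmul (ℓ : ℕ) (R : AddSubgroup G) :
    Nat.card (R ⊓ (nsmulAddMonoidHom ℓ).ker : AddSubgroup G) =
      Nat.card (nsmulAddMonoidHom ℓ : R →+ R).ker := by
  have : (nsmulAddMonoidHom ℓ : R →+ R).ker.map R.subtype = R ⊓ (nsmulAddMonoidHom ℓ).ker := by
    ext x
    simp [and_comm]
  rw [← this, card_map_of_injective R.subtype_injective]

lemma closure_range_comp_eq_top {t : ℕ} {x : Fin t → G} (hx : closure (Set.range x) = ⊤)
    {f : G →+ G₂} (hf : Function.Surjective f) : closure (Set.range (f ∘ x)) = ⊤ := by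
  rw [Set.range_comp, ← AddMonoidHom.map_closure, hx, map_top_of_surjective f hf]

lemma card_le_pow_of_nsmul_eq_zero {Q : Type*} [AddCommGroup Q] {ℓ t : ℕ} [NeZero ℓ]
    (hQ : ∀ x : Q, ℓ • x = 0) {y : Fin t → Q} (hy : closure (Set.range y) = ⊤) :
    Nat.card Q ≤ ℓ ^ t := by
  have := AddCommGroup.zmodModule hQ
  have hspan : Function.Surjective (Fintype.linearCombination (ZMod ℓ) y) := by
    rw [← LinearMap.range_eq_top, Fintype.range_linearCombination, eq_top_iff]
    intro x _
    exact (closure_le (Submodule.span (ZMod ℓ) (Set.range y)).toAddSubgroup).2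
      Submodule.subset_span (hy ▸ mem_top x)
  calc Nat.card Q ≤ Nat.card (Fin t → ZMod ℓ) := Nat.card_le_card_of_surjective _ hspan
    _ = ℓ ^ t := by simp

lemma card_ker_nsmul_le {D : Type*} [AddCommGroup D] [Finite D] {ℓ t : ℕ} [NeZero ℓ]
    {y : Fin t → D} (hy : closure (Set.range y) = ⊤) :
    Nat.card (nsmulAddMonoidHom ℓ : D →+ D).ker ≤ ℓ ^ t := by
  rw [← index_range]
  refine card_le_pow_of_nsmul_eq_zero (fun x => ?_)
    (closure_range_comp_eq_top hy (QuotientAddGroup.mk'_surjective _))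
  induction x using QuotientAddGroup.induction_on with
  | H x => exact (QuotientAddGroup.eq_zero_iff _).2 ⟨x, rfl⟩

lemma card_range_inf_ker_nsmul_le {G' : Type*} [AddCommGroup G'] [Finite G] {ℓ t : ℕ} [NeZero ℓ]
    (ψ : G' →+ G) {x : Fin t → G'} (hx : closure (Set.range x) = ⊤) :
    Nat.card (ψ.range ⊓ (nsmulAddMonoidHom ℓ).ker : AddSubgroup G) ≤ ℓ ^ t := by
  rw [card_inf_ker_nsmul]
  exact card_ker_nsmul_le (closure_range_comp_eq_top hx ψ.rangeRestrict_surjective)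

lemma card_torsionOfMultiples_top_of_isAddCyclic [IsAddCyclic G] [Finite G] {ℓ c : ℕ} [NeZero ℓ]
    (hG : Nat.card G = ℓ ^ c) (k : ℕ) :
    Nat.card (torsionOfMultiples ℓ k (⊤ : AddSubgroup G)) = if k < c then ℓ else 1 := by
  rw [torsionOfMultiples, ← AddMonoidHom.range_eq_map, card_inf_ker_nsmul,
    IsAddCyclic.card_nsmulAddMonoidHom_ker, IsAddCyclic.card_nsmulAddMonoidHom_range, hG]
  split_ifs with h
  · rw [Nat.gcd_eq_right (pow_dvd_pow ℓ h.le), Nat.pow_div h.le (NeZero.pos ℓ)]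
    exact Nat.gcd_eq_right (dvd_pow_self ℓ (by omega))
  · rw [Nat.gcd_eq_left (pow_dvd_pow ℓ (not_lt.1 h)), Nat.div_self (pow_pos (NeZero.pos ℓ) c),
      Nat.gcd_one_left]

lemma torsionOfMultiples_top_pi {ι : Type*} {A : ι → Type*} [∀ i, AddCommGroup (A i)] (ℓ k : ℕ) :
    torsionOfMultiples ℓ k (⊤ : AddSubgroup (Π i, A i)) =
      pi Set.univ fun _ => torsionOfMultiples ℓ k ⊤ := by
  ext x
  simp only [torsionOfMultiples, ← AddMonoidHom.range_eq_map, mem_inf, AddMonoidHom.mem_range,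
    AddMonoidHom.mem_ker, nsmulAddMonoidHom_apply, mem_pi, Set.mem_univ, true_implies]
  constructor
  · rintro ⟨⟨z, rfl⟩, hx⟩
    exact fun i => ⟨⟨z i, rfl⟩, congrFun hx i⟩
  · intro h
    exact ⟨⟨fun i => (h i).1.choose, funext fun i => (h i).1.choose_spec⟩, funext fun i => (h i).2⟩

lemma card_pi {ι : Type*} [Fintype ι] {A : ι → Type*} [∀ i, AddGroup (A i)]
    (H : ∀ i, AddSubgroup (A i)) : Nat.card (pi Set.univ H) = ∏ i, Nat.card (H i) := by
  rw [← Nat.card_pi]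
  exact Nat.card_congr ((Equiv.subtypeEquivRight fun f => by simp [mem_pi]).trans
    (Equiv.subtypePiEquivPi (p := fun i a => a ∈ H i)))

lemma card_torsionOfMultiples_top_pi_zmod {ι : Type*} [Fintype ι] {ℓ : ℕ} [NeZero ℓ] (a : ι → ℕ)
    (k : ℕ) : Nat.card (torsionOfMultiples ℓ k (⊤ : AddSubgroup (Π i, ZMod (ℓ ^ a i)))) =
      ℓ ^ #{i | k < a i} := by
  rw [torsionOfMultiples_top_pi, card_pi, card_filter, ← prod_pow_eq_pow_sum]
  refine prod_congr rfl fun i _ => ?_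
  rw [card_torsionOfMultiples_top_of_isAddCyclic (Nat.card_zmod _)]
  split_ifs <;> simp

lemma map_torsionOfMultiples {f : G →+ G₂} (hf : Function.Injective f) (ℓ k : ℕ)
    (U : AddSubgroup G) : (torsionOfMultiples ℓ k U).map f = torsionOfMultiples ℓ k (U.map f) := by
  ext x
  simp only [torsionOfMultiples, mem_map, mem_inf, AddMonoidHom.mem_ker, nsmulAddMonoidHom_apply]
  constructor
  · rintro ⟨_, ⟨⟨u, hu, rfl⟩, hℓ⟩, rfl⟩
    exact ⟨⟨f u, ⟨u, hu, rfl⟩, (map_nsmul f _ u).symm⟩, by rw [← map_nsmul, hℓ, map_zero]⟩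
  · rintro ⟨⟨_, ⟨u, hu, rfl⟩, rfl⟩, hℓ⟩
    refine ⟨ℓ ^ k • u, ⟨⟨u, hu, rfl⟩, hf ?_⟩, map_nsmul f _ u⟩
    rw [map_nsmul, map_nsmul, hℓ, map_zero]

lemma card_torsionOfMultiples_map {f : G →+ G₂} (hf : Function.Injective f) (ℓ k : ℕ)
    (U : AddSubgroup G) :
    Nat.card (torsionOfMultiples ℓ k (U.map f)) = Nat.card (torsionOfMultiples ℓ k U) := by
  rw [← map_torsionOfMultiples hf, card_map_of_injective hf]

lemma card_torsionOfMultiples_top_of_addEquiv {ι : Type*} [Fintype ι] {ℓ : ℕ} [NeZero ℓ]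
    {a : ι → ℕ} (e : G ≃+ Π i, ZMod (ℓ ^ a i)) (k : ℕ) :
    Nat.card (torsionOfMultiples ℓ k (⊤ : AddSubgroup G)) = ℓ ^ #{i | k < a i} := by
  rw [← card_torsionOfMultiples_map (f := e.toAddMonoidHom) e.injective,
    map_top_of_surjective _ e.surjective, card_torsionOfMultiples_top_pi_zmod]

theorem card_torsionOfMultiples_top_le {G' : Type*} [AddCommGroup G'] [Finite G] {ℓ t : ℕ}
    [NeZero ℓ] {π : G →+ G'} (hπ : Function.Surjective π) {x : Fin t → G'}
    (hx : closure (Set.range x) = ⊤) (k : ℕ) :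
    Nat.card (torsionOfMultiples ℓ k (⊤ : AddSubgroup G)) ≤
      ℓ ^ t * Nat.card (torsionOfMultiples ℓ k π.ker) := by
  let q := QuotientAddGroup.mk' (π.ker.map (nsmulAddMonoidHom (ℓ ^ k)))
  let φ := q.comp (nsmulAddMonoidHom (ℓ ^ k))
  have hφ : π.ker ≤ φ.ker := fun g hg => (QuotientAddGroup.eq_zero_iff _).2 ⟨g, hg, rfl⟩
  let ψ := π.liftOfRightInverse _ (Function.rightInverse_surjInv hπ) ⟨φ, hφ⟩
  have hψ : ψ.range = φ.range := by
    have hcomp : ψ.comp π = φ := π.liftOfRightInverse_comp _ _ ⟨φ, hφ⟩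
    rw [← hcomp, AddMonoidHom.range_comp, AddMonoidHom.range_eq_top.2 hπ,
      ← AddMonoidHom.range_eq_map]
  have hmap : (torsionOfMultiples ℓ k ⊤).map q ≤ ψ.range ⊓ (nsmulAddMonoidHom ℓ).ker := by
    rintro _ ⟨_, ⟨⟨z, -, rfl⟩, hℓ⟩, rfl⟩
    have hℓ' : ℓ • ℓ ^ k • z = 0 := hℓ
    refine ⟨hψ ▸ ⟨z, rfl⟩, ?_⟩
    show ℓ • q (ℓ ^ k • z) = 0
    rw [← map_nsmul, hℓ', map_zero]
  have hker : torsionOfMultiples ℓ k ⊤ ⊓ q.ker = torsionOfMultiples ℓ k π.ker := by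
    rw [torsionOfMultiples, torsionOfMultiples, QuotientAddGroup.ker_mk', inf_right_comm,
      inf_eq_right.2 (map_mono le_top)]
  rw [card_eq_card_map_mul_card_inf_ker _ q, hker]
  exact Nat.mul_le_mul_right _ ((card_le_of_le hmap).trans (card_range_inf_ker_nsmul_le ψ hx))

end AddSubgroup

lemma le_of_forall_card_filter_lt_le {r s : ℕ} (hs : s ≤ r) {m : Fin r → ℕ} {n : Fin s → ℕ}
    (hm : Monotone m) (hn : Monotone n) (h : ∀ k, #{i | k < m i} ≤ r - s + #{j | k < n j})
    (i : Fin s) : m (Fin.castLE hs i) ≤ n i := by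
  by_contra! hlt
  have hG : r - i ≤ #{j | n i < m j} := by
    rw [← Fin.val_castLE hs i, ← Fin.card_Ici]
    exact card_le_card fun j hj => mem_filter.2 ⟨mem_univ _, hlt.trans_le (hm (mem_Ici.1 hj))⟩
  have hH : #{j | n i < n j} ≤ s - 1 - i := by
    rw [← Fin.card_Ioi]
    exact card_le_card fun j hj => mem_Ioi.2 (hn.reflect_lt (mem_filter.1 hj).2)
  have := h (n i)
  omega

theorem key_lemma_first_part_general (ℓ : ℕ) (hℓ : ℓ.Prime)
    (H G G' : Type) [AddCommGroup H] [AddCommGroup G] [AddCommGroup G']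
    [Finite G]
    (ι : H →+ G) (π : G →+ G')
    (hι : Function.Injective ι) (hπ : Function.Surjective π)
    (hexact : ι.range = π.ker)
    (r s : ℕ) (hs : s ≤ r)
    (m : Fin r → ℕ) (n : Fin s → ℕ) (hm : Monotone m) (hn : Monotone n)
    (eG : G ≃+ Π i : Fin r, ZMod (ℓ ^ m i))
    (eH : H ≃+ Π i : Fin s, ZMod (ℓ ^ n i))
    (hgen : ∃ x : Fin (r - s) → G', AddSubgroup.closure (Set.range x) = ⊤) :
    ∀ i : Fin s, m (Fin.castLE hs i) ≤ n i := by
  obtain ⟨x, hx⟩ := hgen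
  have : NeZero ℓ := ⟨hℓ.ne_zero⟩
  refine le_of_forall_card_filter_lt_le hs hm hn fun k => ?_
  have hH : Nat.card (AddSubgroup.torsionOfMultiples ℓ k π.ker) = ℓ ^ #{j | k < n j} := by
    rw [← hexact, AddMonoidHom.range_eq_map, AddSubgroup.card_torsionOfMultiples_map hι,
      AddSubgroup.card_torsionOfMultiples_top_of_addEquiv eH]
  rw [← Nat.pow_le_pow_iff_right hℓ.one_lt, pow_add,
    ← AddSubgroup.card_torsionOfMultiples_top_of_addEquiv eG, ← hH]
  exact AddSubgroup.card_torsionOfMultiples_top_le hπ hx k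

/-- Key lemma (first part): for a short exact sequence `0 → H → G → G' → 0` of finite
abelian `ℓ`-groups, with `G ≅ ⊕ ℤ/ℓ^{m_i}` (`m` increasing) and `H ≅ ⊕ ℤ/ℓ^{n_i}`
(`n` increasing), if `G'` is generated by `r - s` elements then `m_i ≤ n_i` for `i ≤ s`. -/
theorem key_lemma_first_part (ℓ : ℕ) (hℓ : ℓ.Prime)
    (H G G' : Type) [AddCommGroup H] [AddCommGroup G] [AddCommGroup G']
    [Finite H] [Finite G] [Finite G']
    (ι : H →+ G) (π : G →+ G')
    (hι : Function.Injective ι) (hπ : Function.Surjective π)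
    (hexact : ι.range = π.ker)
    (r s : ℕ) (hs : s ≤ r)
    (m : Fin r → ℕ) (n : Fin s → ℕ) (hm : Monotone m) (hn : Monotone n)
    (eG : G ≃+ Π i : Fin r, ZMod (ℓ ^ m i))
    (eH : H ≃+ Π i : Fin s, ZMod (ℓ ^ n i))
    (hgen : ∃ x : Fin (r - s) → G', AddSubgroup.closure (Set.range x) = ⊤) :
    ∀ i : Fin s, m (Fin.castLE hs i) ≤ n i :=
  key_lemma_first_part_general ℓ hℓ H G G' ι π hι hπ hexact r s hs m n hm hn eG eH hgen
end

section
/- Let 0 → H → G → G' → 0 be a short exact sequence of finite abelian ℓ-groups, with G ≅ ⊕_{i=1}^r ℤ/ℓ^{m_i}ℤ (0 ≤ m_1 ≤ … ≤ m_r), H generated by s elements, and G' ≅ ⊕_{i=1}^{r-s} ℤ/ℓ^{n'_i}ℤ (0 ≤ n'_1 ≤ … ≤ n'_{r-s}). Then m_i ≥ n'_{i-s} for all s+1 ≤ i ≤ r. -/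
/-!
Fix `K : ℕ` and let `J`, `J'` index the cyclic factors of `G`, `G'` of exponent `> K`.
Reducing the factors of `G'` indexed by `J'` modulo `ℓ^(K+1)` turns `G → G'` into a surjection
of `G` onto `M = (ℤ/ℓ^(K+1))^J'`. The generators of `G` of order `≤ ℓ^K` land in `ℓ M`, so by
Nakayama the images of the `J` generators of order `> ℓ^K` generate `M`, whence `|J'| ≤ |J|`.
Were `m_{s+i} < n'_i`, monotonicity would give, for `K = m_{s+i}`,
`|J'| ≥ r - s - i > r - (s + i + 1) ≥ |J|`.
-/

open Finset

lemma ZMod.exists_eq_nsmul_of_pow_nsmul_eq_zero {ℓ K : ℕ} (hℓ : ℓ ≠ 0)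
    {u : ZMod (ℓ ^ (K + 1))} (h : ℓ ^ K • u = 0) : ∃ v, u = ℓ • v := by
  have : NeZero (ℓ ^ (K + 1)) := ⟨pow_ne_zero _ hℓ⟩
  have hdvd : ℓ ^ K * ℓ ∣ ℓ ^ K * u.val := by
    rw [← pow_succ, ← ZMod.natCast_eq_zero_iff]
    simpa [nsmul_eq_mul] using h
  obtain ⟨t, ht⟩ := Nat.dvd_of_mul_dvd_mul_left (pow_pos (Nat.pos_of_ne_zero hℓ) K) hdvd
  refine ⟨t, ?_⟩
  rw [← ZMod.natCast_zmod_val u, ht, nsmul_eq_mul, Nat.cast_mul]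

lemma AddSubgroup.eq_top_of_sup_range_nsmul_eq_top {C : Type*} [AddCommGroup C] {ℓ t : ℕ}
    {S : AddSubgroup C} (hexp : ∀ x : C, ℓ ^ t • x = 0)
    (hS : S ⊔ (nsmulAddMonoidHom ℓ).range = ⊤) : S = ⊤ := by
  have key : ∀ u : ℕ, ∀ x : C, ∃ y ∈ S, ∃ z : C, x = y + ℓ ^ u • z := by
    intro u
    induction u with
    | zero => exact fun x => ⟨0, S.zero_mem, x, by simp⟩
    | succ u ih =>
      intro x
      obtain ⟨y, hy, z, rfl⟩ := ih x
      obtain ⟨y', hy', _, ⟨z', rfl⟩, rfl⟩ := mem_sup.mp (hS ▸ mem_top z)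
      refine ⟨y + ℓ ^ u • y', S.add_mem hy (S.nsmul_mem hy' _), z', ?_⟩
      simp only [nsmulAddMonoidHom_apply, smul_add, smul_smul, ← pow_succ, add_assoc]
  refine eq_top_iff.mpr fun x _ => ?_
  obtain ⟨y, hy, z, rfl⟩ := key t x
  rwa [hexp z, add_zero]

lemma card_le_pow_card_of_closure_range_eq_top {n : ℕ} [NeZero n] {M ι : Type*}
    [AddCommGroup M] [Module (ZMod n) M] [Fintype ι] {c : ι → M}
    (hc : AddSubgroup.closure (Set.range c) = ⊤) : Nat.card M ≤ n ^ Fintype.card ι := by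
  have hspan : Submodule.span (ZMod n) (Set.range c) = ⊤ := by
    rw [eq_top_iff, ← Submodule.toAddSubgroup_le, Submodule.top_toAddSubgroup, ← hc,
      AddSubgroup.closure_le]
    exact Submodule.subset_span
  have hsurj : Function.Surjective (Fintype.linearCombination (ZMod n) c) := by
    rw [← LinearMap.range_eq_top, Fintype.range_linearCombination, hspan]
  simpa [Nat.card_fun] using Nat.card_le_card_of_surjective _ hsurj

lemma AddMonoidHom.map_pi_zmod_eq_sum {ι M : Type*} [Fintype ι] [DecidableEq ι] [AddCommGroup M]
    {d : ι → ℕ} (f : (Π j, ZMod (d j)) →+ M) (v : Π j, ZMod (d j)) :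
    f v = ∑ j, ((v j).cast : ℤ) • f (Pi.single j 1) := by
  conv_lhs => rw [← univ_sum_single v]
  rw [map_sum]
  refine sum_congr rfl fun j _ => ?_
  rw [← map_zsmul, ← Pi.single_zsmul, zsmul_one, ZMod.intCast_zmod_cast]

lemma exists_surjective_pi_zmod_restrict {κ : Type*} {d : κ → ℕ} {N : ℕ} (p : κ → Prop)
    (hp : ∀ j, p j → N ∣ d j) :
    ∃ ρ : (Π j, ZMod (d j)) →+ ({j // p j} → ZMod N), Function.Surjective ρ := by
  classical
  refine ⟨AddMonoidHom.pi fun j =>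
    (ZMod.castHom (hp j j.2) (ZMod N)).toAddMonoidHom.comp (Pi.evalAddMonoidHom _ j.1), ?_⟩
  intro w
  choose a ha using fun j : {j // p j} => ZMod.castHom_surjective (hp j j.2) (w j)
  refine ⟨fun j => if h : p j then a ⟨j, h⟩ else 0, funext fun j => ?_⟩
  change ZMod.castHom (hp j j.2) (ZMod N) (dite (p j) (fun h => a ⟨j, h⟩) fun _ => 0) = w j
  rw [dif_pos j.2, ha]

theorem card_lt_exponents_le_of_surjective {ι κ : Type*} [Fintype ι] [DecidableEq ι] [Fintype κ]
    {ℓ : ℕ} (hℓ : 1 < ℓ) {m : ι → ℕ} {n : κ → ℕ}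
    {φ : (Π j, ZMod (ℓ ^ m j)) →+ (Π j, ZMod (ℓ ^ n j))} (hφ : Function.Surjective φ) (K : ℕ) :
    Fintype.card {j // K < n j} ≤ Fintype.card {j // K < m j} := by
  obtain ⟨ρ, hρ⟩ := exists_surjective_pi_zmod_restrict (N := ℓ ^ (K + 1)) (fun j => K < n j)
    fun j hj => pow_dvd_pow ℓ hj
  let c : ι → {j // K < n j} → ZMod (ℓ ^ (K + 1)) := fun j => ρ (φ (Pi.single j 1))
  let S := AddSubgroup.closure (Set.range fun j : {j // K < m j} => c j)
  have hc : ∀ j, c j ∈ S ⊔ (nsmulAddMonoidHom ℓ).range := by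
    intro j
    by_cases hj : K < m j
    · exact le_sup_left (α := AddSubgroup _) (AddSubgroup.subset_closure ⟨⟨j, hj⟩, rfl⟩)
    · have hone : ℓ ^ m j • (1 : ZMod (ℓ ^ m j)) = 0 := by
        rw [nsmul_eq_mul, mul_one, ZMod.natCast_self]
      have hord : ℓ ^ m j • c j = 0 := by
        simp only [c, ← map_nsmul, ← Pi.single_smul, hone, Pi.single_zero, map_zero]
      obtain ⟨k, hk⟩ := pow_dvd_pow ℓ (not_lt.mp hj)
      have hK : ℓ ^ K • c j = 0 := by rw [hk, mul_nsmul, hord, smul_zero]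
      choose v hv using fun i => ZMod.exists_eq_nsmul_of_pow_nsmul_eq_zero (by omega) (congrFun hK i)
      exact le_sup_right (α := AddSubgroup _) ⟨v, (funext hv).symm⟩
  have hsup : S ⊔ (nsmulAddMonoidHom ℓ).range = ⊤ := by
    refine eq_top_iff.mpr fun w _ => ?_
    obtain ⟨v, rfl⟩ := hρ.comp hφ w
    rw [Function.comp_apply, ← AddMonoidHom.comp_apply, AddMonoidHom.map_pi_zmod_eq_sum]
    exact sum_mem fun j _ => zsmul_mem (hc j) _
  have hS : S = ⊤ := AddSubgroup.eq_top_of_sup_range_nsmul_eq_top (t := K + 1)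
    (fun x => funext fun i => by simp [nsmul_eq_mul]) hsup
  have : NeZero (ℓ ^ (K + 1)) := ⟨pow_ne_zero _ (by omega)⟩
  have hcard := card_le_pow_card_of_closure_range_eq_top (n := ℓ ^ (K + 1)) hS
  rw [Nat.card_fun, Nat.card_zmod, Nat.card_eq_fintype_card] at hcard
  exact (Nat.pow_le_pow_iff_right (Nat.one_lt_pow (by omega) hℓ)).mp hcard

lemma Fin.card_sub_le_card_filter_lt {N K : ℕ} {f : Fin N → ℕ} (hf : Monotone f) {i : Fin N}
    (hi : K < f i) : N - i ≤ #{j | K < f j} := by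
  rw [← Fin.card_Ici]
  exact card_le_card fun j hj => mem_filter.mpr ⟨mem_univ _, hi.trans_le (hf (mem_Ici.mp hj))⟩

lemma Fin.card_filter_lt_le_sub {N K : ℕ} {f : Fin N → ℕ} (hf : Monotone f) {i : Fin N}
    (hi : f i ≤ K) : #{j | K < f j} ≤ N - 1 - i := by
  rw [← Fin.card_Ioi]
  refine card_le_card fun j hj => mem_Ioi.mpr (lt_of_not_ge fun hji => ?_)
  exact (mem_filter.mp hj).2.not_ge ((hf hji).trans hi)

theorem key_lemma_dual_part (ℓ : ℕ) (hℓ : ℓ.Prime)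
    (G G' : Type) [AddCommGroup G] [AddCommGroup G']
    (π : G →+ G')
    (hπ : Function.Surjective π)
    (r s : ℕ)
    (m : Fin r → ℕ) (n' : Fin (r - s) → ℕ) (hm : Monotone m) (hn' : Monotone n')
    (eG : G ≃+ Π i : Fin r, ZMod (ℓ ^ m i))
    (eG' : G' ≃+ Π i : Fin (r - s), ZMod (ℓ ^ n' i)) :
    ∀ i : Fin (r - s), n' i ≤ m ⟨s + i, by omega⟩ := by
  intro i
  by_contra! hlt
  set k : Fin r := ⟨s + i, by omega⟩
  have hsurj : Function.Surjective ((eG'.toAddMonoidHom.comp π).comp eG.symm.toAddMonoidHom) :=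
    eG'.surjective.comp (hπ.comp eG.symm.surjective)
  have hcard := card_lt_exponents_le_of_surjective hℓ.one_lt hsurj (m k)
  rw [Fintype.card_subtype, Fintype.card_subtype] at hcard
  have hlower := Fin.card_sub_le_card_filter_lt hn' hlt
  have hupper := Fin.card_filter_lt_le_sub hm (le_refl (m k))
  have hk : (k : ℕ) = s + i := rfl
  omega
end

section
/- Let T be a ℤ_ℓ[t]-module, free of rank r over ℤ_ℓ, and T_1 ⊆ T a t-stable submodule of ℤ_ℓ-rank s with T/T_1 torsion-free over ℤ_ℓ. Assume 1−t acts injectively on T ⊗ ℚ_ℓ. Let (m_1,…,m_r) be the increasingly ordered exponents of the finite abelian ℓ-group T/(1−t)T, and (n_1,…,n_s) those of T_1/(1−t)T_1. Then m_i ≤ n_i for 1 ≤ i ≤ s. -/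
/-!
Write `Q = T/(1-t)T`. For a finite abelian `ℓ`-group with exponents `(m_j)`, the layer
`ℓ^c Q/ℓ^{c+1} Q` has order `ℓ^{#{j | c < m_j}}`; pulling back along `T ↠ Q`, it becomes the
quotient of `T` by a subgroup `U_c ⊇ ℓT`. Because `T/T₁` is torsion-free, `T₁/ℓT₁` embeds into
`T/ℓT`, and it carries `U_c(T₁)/ℓT₁` into `U_c(T)/ℓT`. Comparing indices with
`[T : ℓT] = ℓ^r`, `[T₁ : ℓT₁] = ℓ^s` gives `#{j | c < m_j} + s ≤ #{j | c < n_j} + r` for every `c`,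
and for increasing sequences these inequalities at `c = n_i` force `m_i ≤ n_i`.
-/

open Finset Module

namespace AddSubgroup

variable {G H : Type*} [AddCommGroup G] [AddCommGroup H]

variable (G) in
/-- `G ⧸ nsmulLayer G p c` is the layer `p ^ c • G ⧸ p ^ (c + 1) • G` of the `p`-adic filtration. -/
def nsmulLayer (p c : ℕ) : AddSubgroup G :=
  (nsmulAddMonoidHom (p ^ (c + 1))).range.comap (nsmulAddMonoidHom (p ^ c))

lemma range_nsmul_le_of_dvd {a b : ℕ} (h : a ∣ b) :
    (nsmulAddMonoidHom (α := G) b).range ≤ (nsmulAddMonoidHom a).range := by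
  obtain ⟨d, rfl⟩ := h
  rintro _ ⟨x, rfl⟩
  exact ⟨d • x, by simp [mul_smul]⟩

lemma index_nsmulLayer_mul_index (p c : ℕ) :
    (nsmulLayer G p c).index * (nsmulAddMonoidHom (α := G) (p ^ c)).range.index =
      (nsmulAddMonoidHom (α := G) (p ^ (c + 1))).range.index := by
  rw [nsmulLayer, index_comap,
    relIndex_mul_index (range_nsmul_le_of_dvd (pow_dvd_pow p c.le_succ))]

lemma range_nsmul_le_nsmulLayer (p c : ℕ) :
    (nsmulAddMonoidHom (α := G) p).range ≤ nsmulLayer G p c := by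
  rintro _ ⟨x, rfl⟩
  exact ⟨x, by simp [pow_succ, mul_smul]⟩

lemma nsmulLayer_le_comap (f : G →+ H) (p c : ℕ) :
    nsmulLayer G p c ≤ (nsmulLayer H p c).comap f := by
  rintro x ⟨y, hy⟩
  exact ⟨f y, by simpa [← map_nsmul] using congrArg f hy⟩

lemma index_mul_index_comap_le (f : G →+ H) {L U : AddSubgroup H} {U₁ : AddSubgroup G}
    (hLU : L ≤ U) (hL : L.index ≠ 0) (hU₁ : L.comap f ≤ U₁) (hU₁U : U₁ ≤ U.comap f) :
    U.index * (L.comap f).index ≤ U₁.index * L.index := by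
  have hrel : L.relIndex U ≠ 0 := left_ne_zero_of_mul (relIndex_mul_index hLU ▸ hL)
  calc U.index * (L.comap f).index = U.index * (L.relIndex (U₁.map f) * U₁.index) := by
        rw [← relIndex_comap, relIndex_mul_index hU₁]
    _ ≤ U.index * (L.relIndex U * U₁.index) := by
        gcongr
        exact relIndex_le_of_le_right (map_le_iff_le_comap.mpr hU₁U) hrel
    _ = U₁.index * L.index := by
        rw [← relIndex_mul_index hLU]
        ring

end AddSubgroup

open AddSubgroup

lemma Nat.gcd_pow_pow (p a b : ℕ) : (p ^ a).gcd (p ^ b) = p ^ min a b := by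
  rcases le_total a b with h | h
  · rw [min_eq_left h, Nat.gcd_eq_left (pow_dvd_pow _ h)]
  · rw [min_eq_right h, Nat.gcd_eq_right (pow_dvd_pow _ h)]

lemma ZMod.index_range_nsmul (n k : ℕ) [NeZero n] :
    (nsmulAddMonoidHom (α := ZMod n) k).range.index = n.gcd k := by
  have hrange : (nsmulAddMonoidHom (α := ZMod n) k).range = zmultiples (k : ZMod n) := by
    ext x
    simp only [AddMonoidHom.mem_range, nsmulAddMonoidHom_apply, mem_zmultiples_iff, nsmul_eq_mul,
      zsmul_eq_mul]
    constructor
    · rintro ⟨y, rfl⟩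
      exact ⟨y.val, by simp [mul_comm]⟩
    · rintro ⟨z, rfl⟩
      exact ⟨z, mul_comm _ _⟩
  have hcard := card_mul_index (nsmulAddMonoidHom (α := ZMod n) k).range
  rw [hrange, Nat.card_zmultiples, ZMod.addOrderOf_coe _ (NeZero.ne n), Nat.card_zmod] at hcard
  have hpos : 0 < n / n.gcd k :=
    Nat.div_pos (Nat.gcd_le_left _ (NeZero.pos n)) (Nat.gcd_pos_of_pos_left _ (NeZero.pos n))
  rw [hrange]
  refine Nat.eq_of_mul_eq_mul_left hpos ?_
  rw [hcard, Nat.div_mul_cancel (Nat.gcd_dvd_left n k)]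

section ExponentSequence

variable {p : ℕ} {ι Q : Type*} [Fintype ι] [AddCommGroup Q] {m : ι → ℕ}

lemma index_range_nsmul_pow_of_addEquiv (hp : p ≠ 0) (e : Q ≃+ Π i, ZMod (p ^ m i)) (k : ℕ) :
    (nsmulAddMonoidHom (α := Q) (p ^ k)).range.index = p ^ ∑ i, min (m i) k := by
  have : ∀ i, NeZero (p ^ m i) := fun i => ⟨pow_ne_zero _ hp⟩
  rw [← index_map_equiv _ e, e.map_range_nsmulAddMonoidHom, index,
    Nat.card_congr (QuotientAddGroup.addEquivPiModRangeNSMulAddMonoidHom _ _).toEquiv,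
    Nat.card_pi, ← prod_pow_eq_pow_sum]
  refine prod_congr rfl fun i _ => ?_
  rw [← index, ZMod.index_range_nsmul, Nat.gcd_pow_pow]

lemma sum_min_succ (m : ι → ℕ) (c : ℕ) :
    ∑ i, min (m i) (c + 1) = ∑ i, min (m i) c + #{i | c < m i} := by
  rw [card_filter, ← sum_add_distrib]
  exact sum_congr rfl fun i _ => by split_ifs <;> omega

lemma index_nsmulLayer_of_addEquiv (hp : p ≠ 0) (e : Q ≃+ Π i, ZMod (p ^ m i)) (c : ℕ) :
    (nsmulLayer Q p c).index = p ^ #{i | c < m i} := by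
  have h := index_nsmulLayer_mul_index (G := Q) p c
  rw [index_range_nsmul_pow_of_addEquiv hp e, index_range_nsmul_pow_of_addEquiv hp e,
    sum_min_succ, pow_add, mul_comm] at h
  exact Nat.eq_of_mul_eq_mul_left (pow_pos (Nat.pos_of_ne_zero hp) _) h

end ExponentSequence

lemma PadicInt.index_range_nsmul_self (p : ℕ) [Fact p.Prime] :
    (nsmulAddMonoidHom (α := ℤ_[p]) p).range.index = p := by
  have hker : (PadicInt.toZMod (p := p)).toAddMonoidHom.ker =
      (nsmulAddMonoidHom (α := ℤ_[p]) p).range := by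
    ext x
    change x ∈ RingHom.ker PadicInt.toZMod ↔ _
    simp [PadicInt.ker_toZMod, PadicInt.maximalIdeal_eq_span_p, Ideal.mem_span_singleton',
      mul_comm]
  rw [← hker, index_ker, AddMonoidHom.range_eq_top.mpr (ZMod.ringHom_surjective _)]
  simp

lemma PadicInt.index_range_nsmul (p : ℕ) [Fact p.Prime] (M : Type*) [AddCommGroup M]
    [Module ℤ_[p] M] [Module.Free ℤ_[p] M] [Module.Finite ℤ_[p] M] :
    (nsmulAddMonoidHom (α := M) p).range.index = p ^ finrank ℤ_[p] M := by
  rw [← index_map_equiv _ (Module.finBasis ℤ_[p] M).equivFun.toAddEquiv,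
    AddEquiv.map_range_nsmulAddMonoidHom, index,
    Nat.card_congr (QuotientAddGroup.addEquivPiModRangeNSMulAddMonoidHom _ _).toEquiv,
    Nat.card_pi, ← index, PadicInt.index_range_nsmul_self]
  simp

lemma Submodule.comap_subtype_range_nsmul {R M : Type*} [Ring R] [AddCommGroup M] [Module R M]
    (N : Submodule R M) [NoZeroSMulDivisors R (M ⧸ N)] {k : ℕ} (hk : (k : R) ≠ 0) :
    (nsmulAddMonoidHom (α := M) k).range.comap N.subtype.toAddMonoidHom =
      (nsmulAddMonoidHom (α := N) k).range := by
  refine le_antisymm ?_ (fun x ⟨y, hy⟩ => ⟨y, congrArg Subtype.val hy⟩)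
  rintro x ⟨y, hy : k • y = x⟩
  have hky : (k : R) • N.mkQ y = 0 := by
    rw [← map_smul, Nat.cast_smul_eq_nsmul, hy, Submodule.mkQ_apply,
      Submodule.Quotient.mk_eq_zero]
    exact x.2
  have hyN : y ∈ N := (Submodule.Quotient.mk_eq_zero N).mp
    ((NoZeroSMulDivisors.eq_zero_or_eq_zero_of_smul_eq_zero hky).resolve_left hk)
  exact ⟨⟨y, hyN⟩, Subtype.ext hy⟩

lemma index_nsmulLayer_mul_le {p : ℕ} [Fact p.Prime] {M : Type*} [AddCommGroup M]
    [Module ℤ_[p] M] [Free ℤ_[p] M] [Module.Finite ℤ_[p] M]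
    (N : Submodule ℤ_[p] M) [NoZeroSMulDivisors ℤ_[p] (M ⧸ N)]
    {R : Submodule ℤ_[p] M} {R₁ : Submodule ℤ_[p] N} (hR : R₁ ≤ R.comap N.subtype) (c : ℕ) :
    (nsmulLayer (M ⧸ R) p c).index * p ^ finrank ℤ_[p] N ≤
      (nsmulLayer (N ⧸ R₁) p c).index * p ^ finrank ℤ_[p] M := by
  have : Free ℤ_[p] N := free_of_finite_type_torsion_free'
  have hp : p ≠ 0 := (Fact.out : p.Prime).ne_zero
  have hp' : (p : ℤ_[p]) ≠ 0 := Nat.cast_ne_zero.mpr hp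
  let π := R.mkQ.toAddMonoidHom
  let π₁ := R₁.mkQ.toAddMonoidHom
  let ι := N.subtype.toAddMonoidHom
  have hsquare : (R₁.mapQ R N.subtype hR).toAddMonoidHom.comp π₁ = π.comp ι := rfl
  rw [← index_comap_of_surjective (f := π) _ R.mkQ_surjective,
    ← index_comap_of_surjective (f := π₁) _ R₁.mkQ_surjective, ← PadicInt.index_range_nsmul p M,
    ← PadicInt.index_range_nsmul p N, ← N.comap_subtype_range_nsmul hp']
  refine index_mul_index_comap_le ι ?_ ?_ ?_ ?_
  · exact (range_nsmul_le_nsmulLayer p c).trans (nsmulLayer_le_comap π p c)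
  · rw [PadicInt.index_range_nsmul]
    exact pow_ne_zero _ hp
  · rw [N.comap_subtype_range_nsmul hp']
    exact (range_nsmul_le_nsmulLayer p c).trans (nsmulLayer_le_comap π₁ p c)
  · calc (nsmulLayer (N ⧸ R₁) p c).comap π₁
        ≤ ((nsmulLayer (M ⧸ R) p c).comap (R₁.mapQ R N.subtype hR).toAddMonoidHom).comap π₁ :=
          comap_mono (nsmulLayer_le_comap _ p c)
      _ = ((nsmulLayer (M ⧸ R) p c).comap π).comap ι := by
          rw [comap_comap, comap_comap, hsquare]

lemma Fin.le_of_forall_card_lt_add_le {r s : ℕ} (hs : s ≤ r) {m : Fin r → ℕ} {n : Fin s → ℕ}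
    (hm : Monotone m) (hn : Monotone n)
    (h : ∀ c, #{j | c < m j} + s ≤ #{j | c < n j} + r) (i : Fin s) :
    m (Fin.castLE hs i) ≤ n i := by
  by_contra! hlt
  have hm_ge : r - i ≤ #{j | n i < m j} := by
    calc r - (i : ℕ) = #(Ici (Fin.castLE hs i)) := by simp
      _ ≤ _ := card_le_card fun j hj => by
        simpa using hlt.trans_le (hm (mem_Ici.mp hj))
  have hn_le : #{j | n i < n j} ≤ s - 1 - i := by
    calc #{j | n i < n j} ≤ #(Ioi i) := card_le_card fun j hj => by
          simpa using (hn.reflect_lt (mem_filter.mp hj).2)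
      _ = s - 1 - i := Fin.card_Ioi i
  have := h (n i)
  omega

theorem hodge_polygon_of_submodule_general (ℓ : ℕ) [Fact ℓ.Prime]
    (T : Type) [AddCommGroup T] [Module ℤ_[ℓ] T] [Module.Free ℤ_[ℓ] T]
    [Module.Finite ℤ_[ℓ] T]
    (r s : ℕ) (hs : s ≤ r) (hr : Module.finrank ℤ_[ℓ] T = r)
    (E : T →ₗ[ℤ_[ℓ]] T)
    (T₁ : Submodule ℤ_[ℓ] T)
    (hrank₁ : Module.finrank ℤ_[ℓ] T₁ = s)
    (htf : NoZeroSMulDivisors ℤ_[ℓ] (T ⧸ T₁))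
    (m : Fin r → ℕ) (n : Fin s → ℕ) (hm : Monotone m) (hn : Monotone n)
    (em : (T ⧸ LinearMap.range E) ≃+ Π i : Fin r, ZMod (ℓ ^ m i))
    (en : (T₁ ⧸ Submodule.comap T₁.subtype (Submodule.map E T₁)) ≃+
      Π i : Fin s, ZMod (ℓ ^ n i)) :
    ∀ i : Fin s, m (Fin.castLE hs i) ≤ n i := by
  have hℓ : ℓ.Prime := Fact.out
  refine Fin.le_of_forall_card_lt_add_le hs hm hn fun c => ?_
  have hR : Submodule.comap T₁.subtype (Submodule.map E T₁) ≤
      (LinearMap.range E).comap T₁.subtype :=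
    Submodule.comap_mono LinearMap.map_le_range
  have key := index_nsmulLayer_mul_le T₁ hR c
  rw [index_nsmulLayer_of_addEquiv hℓ.ne_zero em, index_nsmulLayer_of_addEquiv hℓ.ne_zero en, hr,
    hrank₁, ← pow_add, ← pow_add] at key
  exact (Nat.pow_le_pow_iff_right hℓ.one_lt).mp key

/-- Theorem (first part): `T` a `ℤ_ℓ[t]`-module free of rank `r` over `ℤ_ℓ` (with `φ`
the action of `t`), `T₁ ⊆ T` a `t`-stable submodule of rank `s` with `T/T₁`
torsion-free, `1 - t` injective.  If `(m_1,…,m_r)` and `(n_1,…,n_s)` are the increasingly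
ordered exponents of `T/(1-t)T` and `T₁/(1-t)T₁`, then `m_i ≤ n_i` for `1 ≤ i ≤ s`. -/
theorem hodge_polygon_of_submodule (ℓ : ℕ) [Fact ℓ.Prime]
    (T : Type) [AddCommGroup T] [Module ℤ_[ℓ] T] [Module.Free ℤ_[ℓ] T]
    [Module.Finite ℤ_[ℓ] T]
    (r s : ℕ) (hs : s ≤ r) (hr : Module.finrank ℤ_[ℓ] T = r)
    (φ E : T →ₗ[ℤ_[ℓ]] T) (hEdef : E = LinearMap.id - φ)
    (hE : Function.Injective E)
    (T₁ : Submodule ℤ_[ℓ] T) (hstab : ∀ x ∈ T₁, φ x ∈ T₁)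
    (hrank₁ : Module.finrank ℤ_[ℓ] T₁ = s)
    (htf : NoZeroSMulDivisors ℤ_[ℓ] (T ⧸ T₁))
    (hstabE : T₁ ≤ T₁.comap E)
    (m : Fin r → ℕ) (n : Fin s → ℕ) (hm : Monotone m) (hn : Monotone n)
    (em : (T ⧸ LinearMap.range E) ≃+ Π i : Fin r, ZMod (ℓ ^ m i))
    (en : (T₁ ⧸ Submodule.comap T₁.subtype (Submodule.map E T₁)) ≃+
      Π i : Fin s, ZMod (ℓ ^ n i)) :
    ∀ i : Fin s, m (Fin.castLE hs i) ≤ n i :=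
  hodge_polygon_of_submodule_general ℓ T r s hs hr E T₁ hrank₁ htf m n hm hn em en
end

section
/- Let T be a ℤ_ℓ[t]-module, free of rank r over ℤ_ℓ, T_1 ⊆ T a t-stable submodule with T_2 = T/T_1 torsion-free over ℤ_ℓ of rank r − s. Assume 1−t is injective on T ⊗ ℚ_ℓ. Let (m_1,…,m_r) be the ordered exponents of T/(1−t)T and (n'_1,…,n'_{r−s}) those of T_2/(1−t)T_2. Then m_i ≥ n'_{i−s} for s+1 ≤ i ≤ r. -/
/-!
Projection to `T₂ = T ⧸ T₁` induces a surjection `T ⧸ (1 - t)T → T₂ ⧸ (1 - t)T₂`. For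
`G ≅ ∏ ZMod (ℓ ^ a i)`, the `𝔽_ℓ`-dimension of `ℓ^k G ⧸ ℓ^(k+1) G` is the number of exponents
`a i > k`, and a surjection of groups can only lower it. For increasingly ordered exponents,
comparing these counts at `k = m (s + i)` forces `n' i ≤ m (s + i)`.
-/

open Function Finset

theorem Submodule.mapQ_surjective_of_surjective {R M M₂ : Type*} [Ring R]
    [AddCommGroup M] [Module R M] [AddCommGroup M₂] [Module R M₂]
    (p : Submodule R M) (q : Submodule R M₂) (f : M →ₗ[R] M₂) (h : p ≤ q.comap f)
    (hf : Surjective f) : Surjective (p.mapQ q f h) := by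
  intro y
  obtain ⟨x, rfl⟩ := q.mkQ_surjective y
  obtain ⟨x, rfl⟩ := hf x
  exact ⟨p.mkQ x, rfl⟩

theorem Submodule.range_le_comap_range_mapQ {R M : Type*} [Ring R] [AddCommGroup M] [Module R M]
    (N : Submodule R M) (E : M →ₗ[R] M) (hE : N ≤ N.comap E) :
    LinearMap.range E ≤ (LinearMap.range (N.mapQ N E hE)).comap N.mkQ := by
  rintro _ ⟨x, rfl⟩
  exact ⟨N.mkQ x, rfl⟩

section

variable {ℓ : ℕ}

theorem pow_nsmul_eq_zero_of_le {c k : ℕ} (hck : c ≤ k) (z : ZMod (ℓ ^ c)) : ℓ ^ k • z = 0 := by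
  rw [nsmul_eq_mul, (ZMod.natCast_eq_zero_iff _ _).mpr (pow_dvd_pow ℓ hck), zero_mul]

/-- Its kernel is `{x | ℓ^k x ∈ ℓ^(k+1) G}`, so it realises `G → ℓ^k G ⧸ ℓ^(k+1) G`. -/
def reduceAbove {ι : Type*} (a : ι → ℕ) (k : ℕ) :
    ((i : ι) → ZMod (ℓ ^ a i)) →+ ({i // k < a i} → ZMod ℓ) :=
  AddMonoidHom.pi fun j =>
    (ZMod.castHom (dvd_pow_self ℓ (by have := j.2; omega)) (ZMod ℓ)).toAddMonoidHom.comp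
      (Pi.evalAddMonoidHom _ j.1)

variable [Fact ℓ.Prime]

theorem ZMod.castHom_eq_zero_iff_exists_pow_nsmul_eq {c k : ℕ} (hkc : k < c) (z : ZMod (ℓ ^ c)) :
    ZMod.castHom (dvd_pow_self ℓ (by omega)) (ZMod ℓ) z = 0 ↔
      ∃ w : ZMod (ℓ ^ c), ℓ ^ k • z = ℓ ^ (k + 1) • w := by
  obtain ⟨a, rfl⟩ := ZMod.intCast_surjective z
  rw [map_intCast, ZMod.intCast_zmod_eq_zero_iff_dvd]
  constructor
  · rintro ⟨b, rfl⟩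
    exact ⟨b, by push_cast; ring⟩
  · rintro ⟨w, hw⟩
    obtain ⟨b, rfl⟩ := ZMod.intCast_surjective w
    have hdvd : (ℓ : ℤ) ^ k * ℓ ∣ ℓ ^ k * (a - ℓ * b) := by
      refine (pow_dvd_pow (ℓ : ℤ) hkc).trans ?_
      rw [← Int.natCast_pow, ← ZMod.intCast_zmod_eq_zero_iff_dvd]
      simp only [nsmul_eq_mul] at hw
      push_cast at hw ⊢
      linear_combination hw
    have hℓ : (ℓ : ℤ) ^ k ≠ 0 := pow_ne_zero _ (by exact_mod_cast (Fact.out : ℓ.Prime).ne_zero)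
    exact (dvd_sub_left (dvd_mul_right _ _)).mp ((mul_dvd_mul_iff_left hℓ).mp hdvd)

theorem reduceAbove_surjective {ι : Type*} (a : ι → ℕ) (k : ℕ) :
    Surjective (reduceAbove (ℓ := ℓ) a k) := by
  intro y
  refine ⟨fun i => if h : k < a i then ((y ⟨i, h⟩).val : ZMod (ℓ ^ a i)) else 0, ?_⟩
  funext j
  simp [reduceAbove, dif_pos j.2]

theorem reduceAbove_eq_zero_iff {ι : Type*} (a : ι → ℕ) (k : ℕ) (x : (i : ι) → ZMod (ℓ ^ a i)) :
    reduceAbove a k x = 0 ↔ ∃ w, ℓ ^ k • x = ℓ ^ (k + 1) • w := by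
  have hcomp (j : {i // k < a i}) :
      reduceAbove a k x j = 0 ↔ ∃ w : ZMod (ℓ ^ a j), ℓ ^ k • x j = ℓ ^ (k + 1) • w :=
    ZMod.castHom_eq_zero_iff_exists_pow_nsmul_eq j.2 (x j)
  rw [funext_iff]
  constructor
  · intro hx
    refine ⟨fun i => if h : k < a i then ((hcomp ⟨i, h⟩).mp (hx ⟨i, h⟩)).choose else 0,
      funext fun i => ?_⟩
    by_cases h : k < a i
    · simpa [dif_pos h] using ((hcomp ⟨i, h⟩).mp (hx ⟨i, h⟩)).choose_spec
    · simp [dif_neg h, pow_nsmul_eq_zero_of_le (not_lt.mp h)]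
  · rintro ⟨w, hw⟩ j
    exact (hcomp j).mpr ⟨w j, congrFun hw j⟩

theorem card_filter_lt_le_of_surjective {ι κ : Type*} [Fintype ι] [Fintype κ]
    (a : ι → ℕ) (b : κ → ℕ) (f : ((i : ι) → ZMod (ℓ ^ a i)) →+ ((j : κ) → ZMod (ℓ ^ b j)))
    (hf : Surjective f) (k : ℕ) : #{j | k < b j} ≤ #{i | k < a i} := by
  have hker (x) (hx : reduceAbove a k x = 0) : reduceAbove b k (f x) = 0 := by
    obtain ⟨w, hw⟩ := (reduceAbove_eq_zero_iff a k x).mp hx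
    exact (reduceAbove_eq_zero_iff b k (f x)).mpr ⟨f w, by rw [← map_nsmul, hw, map_nsmul]⟩
  have hsurj := reduceAbove_surjective (ℓ := ℓ) a k
  -- `reduceAbove b k ∘ f` factors through `reduceAbove a k`
  have hg : Surjective fun y => reduceAbove b k (f (surjInv hsurj y)) := by
    intro z
    obtain ⟨x, rfl⟩ := ((reduceAbove_surjective b k).comp hf) z
    refine ⟨reduceAbove a k x, eq_of_sub_eq_zero ?_⟩
    rw [comp_apply, ← map_sub, ← map_sub]
    exact hker _ (by rw [map_sub, surjInv_eq hsurj, sub_self])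
  have hcard := Nat.card_le_card_of_surjective _ hg
  rwa [Nat.card_fun, Nat.card_fun, Nat.card_zmod,
    Nat.pow_le_pow_iff_right (Fact.out : ℓ.Prime).one_lt, Nat.card_eq_fintype_card,
    Nat.card_eq_fintype_card, Fintype.card_subtype, Fintype.card_subtype] at hcard

end

theorem Fin.le_of_card_filter_lt_le {r s : ℕ} {m : Fin r → ℕ} {n : Fin (r - s) → ℕ}
    (hm : Monotone m) (hn : Monotone n) (h : ∀ k, #{j | k < n j} ≤ #{i | k < m i})
    (i : Fin (r - s)) : n i ≤ m ⟨s + i, by omega⟩ := by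
  by_contra! hlt
  set p : Fin r := ⟨s + i, by omega⟩
  have hupper : #{j | m p < m j} ≤ #(Ioi p) :=
    card_le_card fun j hj => mem_Ioi.mpr (hm.reflect_lt (mem_filter.mp hj).2)
  have hlower : #(Ici i) ≤ #{j | m p < n j} :=
    card_le_card fun j hj => mem_filter.mpr ⟨mem_univ _, hlt.trans_le (hn (mem_Ici.mp hj))⟩
  rw [Fin.card_Ioi] at hupper
  rw [Fin.card_Ici] at hlower
  have hp : (p : ℕ) = s + i := rfl
  have := h (m p)
  omega

theorem hodge_polygon_of_quotient_module (ℓ : ℕ) [Fact ℓ.Prime]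
    (T : Type) [AddCommGroup T] [Module ℤ_[ℓ] T] (r s : ℕ) (hs : s ≤ r)
    (E : T →ₗ[ℤ_[ℓ]] T) (T₁ : Submodule ℤ_[ℓ] T) (hstabE : T₁ ≤ T₁.comap E)
    (m : Fin r → ℕ) (n' : Fin (r - s) → ℕ) (hm : Monotone m) (hn' : Monotone n')
    (em : (T ⧸ LinearMap.range E) ≃+ Π i : Fin r, ZMod (ℓ ^ m i))
    (en' : ((T ⧸ T₁) ⧸ LinearMap.range (Submodule.mapQ T₁ T₁ E hstabE)) ≃+
      Π i : Fin (r - s), ZMod (ℓ ^ n' i)) :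
    ∀ i : Fin (r - s), n' i ≤ m ⟨s + i, by omega⟩ := by
  let q := (LinearMap.range E).mapQ _ T₁.mkQ (T₁.range_le_comap_range_mapQ E hstabE)
  have hq : Surjective q := Submodule.mapQ_surjective_of_surjective _ _ _ _ T₁.mkQ_surjective
  let F := en'.toAddMonoidHom.comp (q.toAddMonoidHom.comp em.symm.toAddMonoidHom)
  have hF : Surjective F := en'.surjective.comp (hq.comp em.symm.surjective)
  exact Fin.le_of_card_filter_lt_le hm hn' (card_filter_lt_le_of_surjective m n' F hF)
end

section
/- Let ℓ be a prime and let X, Y be r×r matrices over ℤ_ℓ[t] with YX = g·I_r for a monic polynomial g ∈ ℤ_ℓ[t] and det X = f a monic polynomial with f(1) ≠ 0 and f dividing g^r. Then T = coker(ℤ_ℓ[t]^r →^X ℤ_ℓ[t]^r) is a free ℤ_ℓ-module of finite rank, and the characteristic polynomial of the action of t on T equals f. -/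
/-!
`T` is killed by `det X = f` (adjugate), so it is a quotient of `(ℤ_ℓ[t] / f)^r` and hence finite
over `ℤ_ℓ`. It is torsion-free: if `c • v = X u`, then `g u = Y X u = c • Y v`, and as `g` is monic,
`c` divides `u`. So `T` is free; if `A` is the matrix of `t` in a basis, then `t - A` is a second
square presentation of `T` over `ℤ_ℓ[t]`. Two square presentations of the same module have
associated determinants, since both block-extend to presentations of the fibre product of the two
surjections, which differ by invertible column operations. So the monic polynomials `det X = f` and
`det (t - A)`, the characteristic polynomial of `t`, coincide.
-/

open Polynomial

namespace Polynomial

variable {R : Type*} [CommRing R]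

theorem Monic.C_dvd_of_C_dvd_mul {g p : R[X]} {c : R} (hg : g.Monic) (h : C c ∣ g * p) :
    C c ∣ p := by
  have hker : Ideal.span {C c} = RingHom.ker (mapRingHom (Ideal.Quotient.mk (Ideal.span {c}))) := by
    rw [ker_mapRingHom, Ideal.mk_ker, Ideal.map_span, Set.image_singleton]
  have hC (q : R[X]) : C c ∣ q ↔ q.map (Ideal.Quotient.mk (Ideal.span {c})) = 0 := by
    rw [← Ideal.mem_span_singleton, hker, RingHom.mem_ker, coe_mapRingHom]
  rw [hC, Polynomial.map_mul] at h
  rw [hC]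
  exact (hg.map _).mul_right_eq_zero_iff.1 h

theorem modByMonic_mem_degreeLT {f : R[X]} (hf : f.Monic) (p : R[X]) :
    p %ₘ f ∈ degreeLT R f.natDegree := by
  nontriviality R
  exact mem_degreeLT.2 ((degree_modByMonic_lt _ hf).trans_eq (degree_eq_natDegree hf.ne_zero))

end Polynomial

namespace LinearMap

open Matrix

variable {S N : Type*} [CommRing S] [AddCommGroup N] [Module S N] {m n : Type*}

theorem mem_ker_comp_funLeft_sub_iff (π : (m → S) →ₗ[S] N) (ρ : (n → S) →ₗ[S] N)
    (w : m ⊕ n → S) :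
    w ∈ ker (π ∘ₗ funLeft S S Sum.inl - ρ ∘ₗ funLeft S S Sum.inr) ↔
      π (w ∘ Sum.inl) = ρ (w ∘ Sum.inr) := by
  simp only [mem_ker, sub_apply, coe_comp, Function.comp_apply, sub_eq_zero]
  rfl

variable [Fintype n]

theorem exists_comp_mulVecLin_eq_of_range_le [DecidableEq n] {l : Type*} (π : (l → S) →ₗ[S] N)
    (φ : (n → S) →ₗ[S] N) (h : range φ ≤ range π) :
    ∃ P : Matrix l n S, π ∘ₗ P.mulVecLin = φ := by
  choose w hw using fun j => h ⟨Pi.single j 1, rfl⟩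
  refine ⟨Matrix.of fun i j => w j i, ?_⟩
  ext j
  simp only [coe_comp, Function.comp_apply, mulVecLin_apply, coe_single, mulVec_single_one]
  exact hw j

variable [Fintype m]

theorem range_fromBlocks_zero_one_eq_ker [DecidableEq n] {π : (m → S) →ₗ[S] N} {ρ : (n → S) →ₗ[S] N}
    {U : Matrix m m S} {α : Matrix m n S} (hU : ker π = range U.mulVecLin)
    (hα : π ∘ₗ α.mulVecLin = ρ) :
    range (fromBlocks U α 0 1).mulVecLin =
      ker (π ∘ₗ funLeft S S Sum.inl - ρ ∘ₗ funLeft S S Sum.inr) := by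
  ext w
  rw [mem_ker_comp_funLeft_sub_iff]
  constructor
  · rintro ⟨u, rfl⟩
    have hπU : π (U *ᵥ (u ∘ Sum.inl)) = 0 := by rw [← mem_ker, hU]; exact ⟨_, rfl⟩
    simp [fromBlocks_mulVec, hπU, ← LinearMap.congr_fun hα]
  · intro hw
    have : w ∘ Sum.inl - α *ᵥ (w ∘ Sum.inr) ∈ ker π := by
      rw [mem_ker, map_sub, hw, ← LinearMap.congr_fun hα, coe_comp, Function.comp_apply, mulVecLin_apply,
        sub_self]
    obtain ⟨u, hu⟩ := hU ▸ this
    rw [mulVecLin_apply] at hu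
    refine ⟨Sum.elim u (w ∘ Sum.inr), funext fun i => ?_⟩
    rcases i with i | i <;> simp [fromBlocks_mulVec, hu]

theorem range_fromBlocks_one_zero_eq_ker [DecidableEq m] {π : (m → S) →ₗ[S] N} {ρ : (n → S) →ₗ[S] N}
    {V : Matrix n n S} {β : Matrix n m S} (hV : ker ρ = range V.mulVecLin)
    (hβ : ρ ∘ₗ β.mulVecLin = π) :
    range (fromBlocks 1 0 β V).mulVecLin =
      ker (π ∘ₗ funLeft S S Sum.inl - ρ ∘ₗ funLeft S S Sum.inr) := by
  ext w
  rw [mem_ker_comp_funLeft_sub_iff]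
  constructor
  · rintro ⟨v, rfl⟩
    have hρV : ρ (V *ᵥ (v ∘ Sum.inr)) = 0 := by rw [← mem_ker, hV]; exact ⟨_, rfl⟩
    simp [fromBlocks_mulVec, hρV, ← LinearMap.congr_fun hβ]
  · intro hw
    have : w ∘ Sum.inr - β *ᵥ (w ∘ Sum.inl) ∈ ker ρ := by
      rw [mem_ker, map_sub, ← hw, ← LinearMap.congr_fun hβ, coe_comp, Function.comp_apply, mulVecLin_apply,
        sub_self]
    obtain ⟨v, hv⟩ := hV ▸ this
    rw [mulVecLin_apply] at hv
    refine ⟨Sum.elim (w ∘ Sum.inl) v, funext fun i => ?_⟩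
    rcases i with i | i <;> simp [fromBlocks_mulVec, hv]

end LinearMap

namespace Matrix

variable {S : Type*} [CommRing S] {n : Type*} [Fintype n] [DecidableEq n]

theorem exists_mul_eq_of_range_mulVecLin_le {A B : Matrix n n S}
    (h : LinearMap.range A.mulVecLin ≤ LinearMap.range B.mulVecLin) : ∃ P, B * P = A := by
  obtain ⟨P, hP⟩ := B.mulVecLin.exists_comp_mulVecLin_eq_of_range_le _ h
  exact ⟨P, ext_iff_mulVec.2 fun v => by rw [← mulVec_mulVec]; exact LinearMap.congr_fun hP v⟩

theorem associated_det_of_range_mulVecLin_eq [IsDomain S] {A B : Matrix n n S}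
    (h : LinearMap.range A.mulVecLin = LinearMap.range B.mulVecLin) :
    Associated A.det B.det := by
  obtain ⟨P, hP⟩ := exists_mul_eq_of_range_mulVecLin_le h.le
  obtain ⟨Q, hQ⟩ := exists_mul_eq_of_range_mulVecLin_le h.ge
  exact associated_of_dvd_dvd ⟨Q.det, by rw [← hQ, det_mul]⟩ ⟨P.det, by rw [← hP, det_mul]⟩

end Matrix

namespace LinearMap

open Matrix

variable {S N : Type*} [CommRing S] [IsDomain S] [AddCommGroup N] [Module S N]
  {m n : Type*} [Fintype m] [DecidableEq m] [Fintype n] [DecidableEq n]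

theorem associated_det_of_ker_eq_range_mulVecLin {π : (m → S) →ₗ[S] N} {ρ : (n → S) →ₗ[S] N}
    (hπ : Function.Surjective π) (hρ : Function.Surjective ρ) {U : Matrix m m S}
    {V : Matrix n n S} (hU : ker π = range U.mulVecLin) (hV : ker ρ = range V.mulVecLin) :
    Associated U.det V.det := by
  obtain ⟨α, hα⟩ := π.exists_comp_mulVecLin_eq_of_range_le ρ (range_eq_top.2 hπ ▸ le_top)
  obtain ⟨β, hβ⟩ := ρ.exists_comp_mulVecLin_eq_of_range_le π (range_eq_top.2 hρ ▸ le_top)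
  simpa [det_fromBlocks_zero₂₁, det_fromBlocks_zero₁₂] using
    associated_det_of_range_mulVecLin_eq ((range_fromBlocks_zero_one_eq_ker hU hα).trans
      (range_fromBlocks_one_zero_eq_ker hV hβ).symm)

end LinearMap

namespace Matrix

variable {R : Type*} [CommRing R] {ι : Type*} [Fintype ι] [DecidableEq ι]

theorem charmatrix_mulVec (A : Matrix ι ι R) (w : ι → R[X]) :
    charmatrix A *ᵥ w = (X : R[X]) • w - A.map C *ᵥ w := by
  ext i
  simp [charmatrix, sub_mulVec]

theorem exists_sub_C_mem_range_charmatrix (A : Matrix ι ι R) (v : ι → R[X]) :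
    ∃ c : ι → R, v - (fun i => C (c i)) ∈ LinearMap.range (charmatrix A).mulVecLin := by
  suffices ∀ d (v : ι → R[X]), (∀ i, (v i).natDegree ≤ d) →
      ∃ c : ι → R, v - (fun i => C (c i)) ∈ LinearMap.range (charmatrix A).mulVecLin from
    this _ v fun i => Finset.le_sup (f := fun i => (v i).natDegree) (Finset.mem_univ i)
  intro d
  induction d with
  | zero =>
    intro v hv
    refine ⟨fun i => (v i).coeff 0, ?_⟩
    rw [show v - _ = 0 from funext fun i => sub_eq_zero.2 (eq_C_of_natDegree_eq_zero
      (Nat.le_zero.1 (hv i)))]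
    exact zero_mem _
  | succ d ih =>
    intro v hv
    -- `v = X • v.divX + v(0) ≡ A • v.divX + v(0)`, which has lower degree
    let q : ι → R[X] := fun i => (v i).divX
    let v' : ι → R[X] := A.map C *ᵥ q + fun i => C ((v i).coeff 0)
    have hv' (i : ι) : (v' i).natDegree ≤ d := by
      refine (natDegree_add_le _ _).trans (max_le ?_ (by simp))
      refine natDegree_sum_le_of_forall_le _ _ fun k _ => (natDegree_C_mul_le _ _).trans ?_
      have := natDegree_divX_eq_natDegree_tsub_one (p := v k)
      have := hv k
      simp only [q]
      omega
    obtain ⟨c, hc⟩ := ih v' hv'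
    have hvv' : v - v' = charmatrix A *ᵥ q := by
      rw [charmatrix_mulVec]
      funext i
      simp only [v', q, Pi.sub_apply, Pi.add_apply, Pi.smul_apply, smul_eq_mul]
      linear_combination (X_mul_divX_add (v i)).symm
    refine ⟨c, ?_⟩
    rw [show v - _ = (v - v') + (v' - fun i => C (c i)) by abel, hvv']
    exact add_mem ⟨q, rfl⟩ hc

end Matrix

namespace Module.Basis

open Matrix

variable {R : Type*} [CommRing R] {ι : Type*} [Fintype ι]
  {T : Type*} [AddCommGroup T] [Module R[X] T] [Module R T] [IsScalarTower R R[X] T]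

theorem linearCombination_polynomial_surjective (b : Basis ι R T) :
    Function.Surjective (Fintype.linearCombination R[X] b) := by
  rw [← LinearMap.range_eq_top, Fintype.range_linearCombination, eq_top_iff]
  intro t _
  exact Submodule.span_le_restrictScalars R R[X] _ (b.span_eq ▸ Submodule.mem_top)

theorem ker_linearCombination_polynomial_eq_range_charmatrix [DecidableEq ι] (b : Basis ι R T) :
    LinearMap.ker (Fintype.linearCombination R[X] b) = LinearMap.range
      (charmatrix (LinearMap.toMatrix b b (Algebra.lsmul R R T (X : R[X])))).mulVecLin := by
  set ρ := Fintype.linearCombination R[X] b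
  set A := LinearMap.toMatrix b b (Algebra.lsmul R R T (X : R[X]))
  have hCsmul (r : R) (t : T) : C r • t = r • t := by rw [← algebraMap_eq, algebraMap_smul]
  have hρC (c : ι → R) : ρ (fun i => C (c i)) = ∑ i, c i • b i := by
    simp [ρ, Fintype.linearCombination_apply, hCsmul]
  have hρA : ρ ∘ₗ (A.map C).mulVecLin = (X : R[X]) • ρ := by
    ext k
    simp [ρ, A, Fintype.linearCombination_apply, LinearMap.toMatrix_apply, hCsmul]
  have hρ_charmatrix (w : ι → R[X]) : ρ (charmatrix A *ᵥ w) = 0 := by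
    rw [charmatrix_mulVec, map_sub, map_smul, ← mulVecLin_apply, ← LinearMap.comp_apply, hρA,
      LinearMap.smul_apply, sub_self]
  refine le_antisymm (fun v hv => ?_) (by rintro _ ⟨w, rfl⟩; exact hρ_charmatrix w)
  obtain ⟨c, hc⟩ := A.exists_sub_C_mem_range_charmatrix v
  have hc0 : c = 0 := by
    obtain ⟨w, hw⟩ := hc
    have := congrArg ρ hw
    rw [mulVecLin_apply, hρ_charmatrix, map_sub, LinearMap.mem_ker.1 hv, zero_sub, hρC,
      eq_comm, neg_eq_zero] at this
    exact funext (Fintype.linearIndependent_iff.1 b.linearIndependent c this)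
  simpa [hc0, ← Pi.zero_def] using hc

end Module.Basis

namespace Submodule

variable {R : Type*} [CommRing R] {n : Type*}

theorem finite_quotient_of_monic_smul_mem [Finite n] {N : Submodule R[X] (n → R[X])} {f : R[X]}
    (hf : f.Monic) (h : ∀ v, f • v ∈ N) : Module.Finite R ((n → R[X]) ⧸ N) := by
  have := Module.Finite.equiv (degreeLTEquiv R f.natDegree).symm
  let q : (n → degreeLT R f.natDegree) →ₗ[R] (n → R[X]) ⧸ N :=
    N.mkQ.restrictScalars R ∘ₗ (degreeLT R f.natDegree).subtype.compLeft n
  refine Module.Finite.of_surjective q fun t => ?_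
  obtain ⟨v, rfl⟩ := N.mkQ_surjective t
  refine ⟨fun i => ⟨v i %ₘ f, modByMonic_mem_degreeLT hf _⟩, ?_⟩
  have : (fun i => v i %ₘ f) - v = -(f • fun i => v i /ₘ f) := by
    funext i
    simp only [Pi.sub_apply, Pi.neg_apply, Pi.smul_apply, smul_eq_mul]
    linear_combination modByMonic_add_div (v i) f
  change N.mkQ (fun i => v i %ₘ f) = N.mkQ v
  rw [mkQ_apply, mkQ_apply, Quotient.eq, this]
  exact N.neg_mem (h _)

end Submodule

namespace Matrix

variable {R : Type*} [CommRing R] {n : Type*} [Fintype n] [DecidableEq n]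

abbrev coker {S : Type*} [CommRing S] (U : Matrix n n S) : Type _ :=
  (n → S) ⧸ LinearMap.range U.mulVecLin

theorem finite_coker {U : Matrix n n R[X]} (hU : U.det.Monic) : Module.Finite R U.coker :=
  Submodule.finite_quotient_of_monic_smul_mem hU fun v => ⟨cramer U v, mulVec_cramer U v⟩

theorem isTorsionFree_coker [IsDomain R] {U Y : Matrix n n R[X]} {g : R[X]} (hg : g.Monic)
    (hYU : Y * U = g • 1) : Module.IsTorsionFree R U.coker := by
  refine .of_smul_eq_zero fun c t hct => or_iff_not_imp_left.2 fun hc => ?_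
  obtain ⟨v, rfl⟩ := Submodule.Quotient.mk_surjective _ t
  rw [← Submodule.Quotient.mk_smul, Submodule.Quotient.mk_eq_zero] at hct
  obtain ⟨u, hu⟩ := hct
  rw [mulVecLin_apply, ← algebraMap_smul R[X] c v, algebraMap_eq] at hu
  have hgu : g • u = C c • (Y *ᵥ v) := by
    rw [← mulVec_smul, ← hu, mulVec_mulVec, hYU, smul_mulVec, one_mulVec]
  choose u' hu' using fun i => hg.C_dvd_of_C_dvd_mul
    ⟨(Y *ᵥ v) i, by simpa [mul_comm] using congrFun hgu i⟩
  have hUu' : C c • (U *ᵥ u') = C c • v := by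
    rw [← mulVec_smul, ← hu]
    congr 1
    funext i
    simp [hu' i]
  exact (Submodule.Quotient.mk_eq_zero _).2
    ⟨u', smul_right_injective _ (C_ne_zero.2 hc) hUu'⟩

theorem charpoly_coker [IsDomain R] (U : Matrix n n R[X]) [Module.Free R U.coker]
    [Module.Finite R U.coker] (hU : U.det.Monic) :
    (Algebra.lsmul R R U.coker (X : R[X])).charpoly = U.det := by
  let b := Module.Free.chooseBasis R U.coker
  rw [← LinearMap.charpoly_toMatrix _ b]
  exact eq_of_monic_of_associated (charpoly_monic _) hU <| Associated.symm <|
    LinearMap.associated_det_of_ker_eq_range_mulVecLin (Submodule.mkQ_surjective _)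
      b.linearCombination_polynomial_surjective (Submodule.ker_mkQ _)
      b.ker_linearCombination_polynomial_eq_range_charmatrix

end Matrix

theorem coker_of_matrix_factorization_general (ℓ : ℕ) [Fact ℓ.Prime] (r : ℕ)
    (X Y : Matrix (Fin r) (Fin r) (Polynomial ℤ_[ℓ]))
    (g f : Polynomial ℤ_[ℓ]) (hg : g.Monic) (hYX : Y * X = g • (1 : Matrix (Fin r) (Fin r) (Polynomial ℤ_[ℓ])))
    (hdet : X.det = f) (hf : f.Monic) :
    ∃ (_ : Module.Free ℤ_[ℓ] ((Fin r → Polynomial ℤ_[ℓ]) ⧸ LinearMap.range X.mulVecLin))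
      (_ : Module.Finite ℤ_[ℓ] ((Fin r → Polynomial ℤ_[ℓ]) ⧸ LinearMap.range X.mulVecLin)),
      LinearMap.charpoly
        ((Algebra.lsmul ℤ_[ℓ] ℤ_[ℓ]
          ((Fin r → Polynomial ℤ_[ℓ]) ⧸ LinearMap.range X.mulVecLin))
          (Polynomial.X : Polynomial ℤ_[ℓ])) = f := by
  subst hdet
  have := X.finite_coker hf
  have := X.isTorsionFree_coker hg hYX
  have : Module.Free ℤ_[ℓ] X.coker := Module.free_of_finite_type_torsion_free'
  exact ⟨‹_›, ‹_›, X.charpoly_coker hf⟩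

/-- Matrix factorizations give Tate modules: if `X, Y` are `r × r` matrices over
`ℤ_ℓ[t]` with `Y * X = g • 1` for a monic `g`, `det X = f` monic with `f(1) ≠ 0` and
`f ∣ g^r`, then `T = coker(X : ℤ_ℓ[t]^r → ℤ_ℓ[t]^r)` is a free `ℤ_ℓ`-module of finite
rank and the characteristic polynomial of the action of `t` on `T` equals `f`. -/
theorem coker_of_matrix_factorization (ℓ : ℕ) [Fact ℓ.Prime] (r : ℕ)
    (X Y : Matrix (Fin r) (Fin r) (Polynomial ℤ_[ℓ]))
    (g f : Polynomial ℤ_[ℓ]) (hg : g.Monic) (hYX : Y * X = g • (1 : Matrix (Fin r) (Fin r) (Polynomial ℤ_[ℓ])))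
    (hdet : X.det = f) (hf : f.Monic) (hf1 : f.eval 1 ≠ 0) (hdvd : f ∣ g ^ r) :
    ∃ (_ : Module.Free ℤ_[ℓ] ((Fin r → Polynomial ℤ_[ℓ]) ⧸ LinearMap.range X.mulVecLin))
      (_ : Module.Finite ℤ_[ℓ] ((Fin r → Polynomial ℤ_[ℓ]) ⧸ LinearMap.range X.mulVecLin)),
      LinearMap.charpoly
        ((Algebra.lsmul ℤ_[ℓ] ℤ_[ℓ]
          ((Fin r → Polynomial ℤ_[ℓ]) ⧸ LinearMap.range X.mulVecLin))
          (Polynomial.X : Polynomial ℤ_[ℓ])) = f :=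
  coker_of_matrix_factorization_general ℓ r X Y g f hg hYX hdet hf
end

section
/- Let ℓ be a prime and (X,Y) a pair of r×r matrices over ℤ_ℓ[t] with YX = g·I_r for a monic polynomial g, det X = f, and X ≡ diag(ℓ^{m_1},…,ℓ^{m_r}) mod (1−t)ℤ_ℓ[t]. Then det Y = g^r/f, and Y ≡ diag(ℓ^{n−m_1},…,ℓ^{n−m_r}) mod (1−t)ℤ_ℓ[t] up to units, where ℓ^n is the ℓ-part of g(1); in particular, if T' = coker(ℤ_ℓ[t]^r →^Y ℤ_ℓ[t]^r) and m = v_ℓ(g(1)), then T'/(1−t)T' ≅ ⊕_{i=1}^r ℤ/ℓ^{m−m_i}ℤ. -/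
/-!
Everything is read off at `t = 1`. Evaluating `Y * X = g • 1` there gives
`Y(1) * diag(ℓ^{m_i}) = g(1) • 1` with `g(1) = u ℓ^m` for a unit `u`; as `ℓ^{m_i} ≠ 0` in the
domain `ℤ_ℓ`, this forces `Y(1) = diag(u ℓ^{m - m_i})`, and every polynomial matrix is congruent
to its value at `1` modulo `1 - t`. Evaluation at `1` identifies `coker Y / (1 - t)` with
`coker Y(1) = ⊕ ℤ_ℓ/(u ℓ^{m - m_i})`, and `ℤ_ℓ/(ℓ^k) ≅ ℤ/ℓ^k` via `PadicInt.toZModPow`.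
-/

open Polynomial

namespace Polynomial

variable {R : Type*} [CommRing R]

theorem one_sub_X_dvd_iff_eval_one_eq_zero {p : R[X]} : 1 - X ∣ p ↔ p.eval 1 = 0 := by
  rw [← neg_sub, neg_dvd, ← C_1, dvd_iff_isRoot, IsRoot.def]

theorem one_sub_X_dvd_sub_C_eval_one (p : R[X]) : 1 - X ∣ p - C (p.eval 1) :=
  one_sub_X_dvd_iff_eval_one_eq_zero.mpr (by simp)

theorem mem_span_one_sub_X_smul_top_iff {n : Type*} (v : n → R[X]) :
    v ∈ Ideal.span {(1 - X : R[X])} • (⊤ : Submodule R[X] (n → R[X])) ↔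
      ∀ i, (v i).eval 1 = 0 := by
  rw [Submodule.ideal_span_singleton_smul, Submodule.mem_smul_pointwise_iff_exists]
  constructor
  · rintro ⟨w, -, rfl⟩ i
    simp
  · intro hv
    choose w hw using fun i => one_sub_X_dvd_iff_eval_one_eq_zero.mpr (hv i)
    exact ⟨w, trivial, _root_.funext fun i => (hw i).symm⟩

end Polynomial

namespace Matrix

variable {m n R : Type*}

theorem eq_of_mul_diagonal_eq_mul_diagonal [Fintype n] [DecidableEq n] [Semiring R]
    [IsRightCancelMulZero R] {A B : Matrix m n R} {d : n → R} (hd : ∀ i, d i ≠ 0)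
    (h : A * diagonal d = B * diagonal d) : A = B :=
  ext fun i j => mul_right_cancel₀ (hd j) (by simpa [mul_diagonal] using congr_fun₂ h i j)

variable [CommRing R]

theorem exists_eq_map_C_add_one_sub_X_smul (M : Matrix m n R[X]) :
    ∃ Z : Matrix m n R[X], M = (M.map (eval 1)).map C + (1 - X : R[X]) • Z := by
  choose Z hZ using fun i j => one_sub_X_dvd_sub_C_eval_one (M i j)
  refine ⟨of Z, ext fun i j => ?_⟩
  simp [← hZ]

theorem map_eval_one_map_C_add_one_sub_X_smul (D : Matrix m n R) (Z : Matrix m n R[X]) :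
    (D.map C + (1 - X : R[X]) • Z).map (eval 1) = D := by
  ext i j
  simp

section Cokernel

variable [Fintype n] [DecidableEq n] {Y : Matrix n n R[X]} {a : n → R}

theorem eval_one_mulVec_of_map_eval_one_eq_diagonal (hY : Y.map (eval 1) = diagonal a)
    (w : n → R[X]) (i : n) : ((Y *ᵥ w) i).eval 1 = a i * (w i).eval 1 := by
  rw [← coe_evalRingHom, RingHom.map_mulVec, coe_evalRingHom, hY, mulVec_diagonal]
  rfl

theorem mem_range_mulVecLin_sup_iff_of_map_eval_one_eq_diagonal
    (hY : Y.map (eval 1) = diagonal a) (v : n → R[X]) :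
    v ∈ LinearMap.range Y.mulVecLin ⊔
        Ideal.span {(1 - X : R[X])} • (⊤ : Submodule R[X] (n → R[X])) ↔
      ∀ i, (v i).eval 1 ∈ Ideal.span {a i} := by
  simp only [Ideal.mem_span_singleton]
  constructor
  · rw [Submodule.mem_sup]
    rintro ⟨_, ⟨w, rfl⟩, b, hb, rfl⟩ i
    rw [mem_span_one_sub_X_smul_top_iff] at hb
    simp [eval_one_mulVec_of_map_eval_one_eq_diagonal hY, hb i]
  · intro hv
    choose c hc using hv
    have hrest : v - Y *ᵥ (fun i => C (c i)) ∈
        Ideal.span {(1 - X : R[X])} • (⊤ : Submodule R[X] (n → R[X])) := by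
      rw [mem_span_one_sub_X_smul_top_iff]
      intro i
      simp [eval_one_mulVec_of_map_eval_one_eq_diagonal hY, hc i]
    simpa using Submodule.add_mem_sup (LinearMap.mem_range_self Y.mulVecLin fun i => C (c i)) hrest

noncomputable def cokernelModOneSubXEquivPi
    (hY : Y.map (eval 1) = diagonal a) :
    ((n → R[X]) ⧸ LinearMap.range Y.mulVecLin) ⧸
        (Ideal.span {(1 - X : R[X])} • ⊤ :
          Submodule R[X] ((n → R[X]) ⧸ LinearMap.range Y.mulVecLin)) ≃+
      Π i, R ⧸ Ideal.span {a i} :=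
  let φ : (n → R[X]) →+* Π i, R ⧸ Ideal.span {a i} :=
    RingHom.pi fun i => (Ideal.Quotient.mk _).comp ((evalRingHom 1).comp (Pi.evalRingHom _ i))
  have hφ (v : n → R[X]) (i : n) : φ v i = Ideal.Quotient.mk _ ((v i).eval 1) := rfl
  have hker : φ.toAddMonoidHom.ker =
      (LinearMap.range Y.mulVecLin ⊔ Ideal.span {(1 - X : R[X])} • ⊤).toAddSubgroup := by
    ext v
    rw [Submodule.mem_toAddSubgroup, mem_range_mulVecLin_sup_iff_of_map_eval_one_eq_diagonal hY]
    simp [funext_iff, hφ, Ideal.Quotient.eq_zero_iff_mem]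
  have hsurj : Function.Surjective φ := fun t => by
    choose c hc using fun i => Ideal.Quotient.mk_surjective (t i)
    exact ⟨fun i => C (c i), _root_.funext fun i => by simp [hφ, hc]⟩
  ((Submodule.quotEquivOfEq _ _ (by
      rw [Submodule.map_smul'', Submodule.map_top, Submodule.range_mkQ])).trans
    (Submodule.quotientQuotientEquivQuotientSup _ _)).toAddEquiv.trans
    ((QuotientAddGroup.quotientAddEquivOfEq hker.symm).trans
      (QuotientAddGroup.quotientKerEquivOfSurjective _ hsurj))

end Cokernel

end Matrix

namespace PadicInt

variable {p : ℕ} [Fact p.Prime]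

noncomputable def quotientSpanUnitMulPowEquivZMod (u : ℤ_[p]ˣ) (k : ℕ) :
    ℤ_[p] ⧸ Ideal.span {(u : ℤ_[p]) * p ^ k} ≃+* ZMod (p ^ k) :=
  (Ideal.quotEquivOfEq (by rw [Ideal.span_singleton_mul_left_unit u.isUnit, ker_toZModPow])).trans
    (RingHom.quotientKerEquivOfSurjective (ZMod.ringHom_surjective (toZModPow k)))

end PadicInt

theorem dual_matrix_factorization_general (ℓ : ℕ) [Fact ℓ.Prime] (r : ℕ)
    (X Y : Matrix (Fin r) (Fin r) (Polynomial ℤ_[ℓ]))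
    (g f : Polynomial ℤ_[ℓ])
    (hYX : Y * X = g • (1 : Matrix (Fin r) (Fin r) (Polynomial ℤ_[ℓ])))
    (hdet : X.det = f) (hg1 : g.eval 1 ≠ 0)
    (m : ℕ) (hm : (g.eval 1).valuation = (m : ℤ))
    (mi : Fin r → ℕ) (hmi : ∀ i, mi i ≤ m)
    (Z : Matrix (Fin r) (Fin r) (Polynomial ℤ_[ℓ]))
    (hX : X = Matrix.diagonal (fun i => (C ((ℓ : ℤ_[ℓ]) ^ mi i) : Polynomial ℤ_[ℓ]))
      + ((1 - Polynomial.X : Polynomial ℤ_[ℓ])) • Z) :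
    f * Y.det = g ^ r ∧
    (∃ (u : Fin r → ℤ_[ℓ]ˣ) (Z' : Matrix (Fin r) (Fin r) (Polynomial ℤ_[ℓ])),
      Y = Matrix.diagonal (fun i => (C ((u i : ℤ_[ℓ]) * (ℓ : ℤ_[ℓ]) ^ (m - mi i))))
        + ((1 - Polynomial.X : Polynomial ℤ_[ℓ])) • Z') ∧
    Nonempty ((((Fin r → Polynomial ℤ_[ℓ]) ⧸ LinearMap.range Y.mulVecLin) ⧸
        ((Ideal.span {(1 - Polynomial.X : Polynomial ℤ_[ℓ])}) •
          (⊤ : Submodule (Polynomial ℤ_[ℓ])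
            ((Fin r → Polynomial ℤ_[ℓ]) ⧸ LinearMap.range Y.mulVecLin)))) ≃+
      Π i : Fin r, ZMod (ℓ ^ (m - mi i))) := by
  have hdetY : f * Y.det = g ^ r := by
    simpa [hdet, mul_comm] using congrArg Matrix.det hYX
  set u := PadicInt.unitCoeff hg1
  have hgu : g.eval 1 = u * (ℓ : ℤ_[ℓ]) ^ m := by
    simpa [show (g.eval 1).valuation = m by exact_mod_cast hm] using PadicInt.unitCoeff_spec hg1
  have hXe : X.map (eval 1) = Matrix.diagonal fun i => (ℓ : ℤ_[ℓ]) ^ mi i := by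
    rw [hX, ← Matrix.diagonal_map (map_zero C), Matrix.map_eval_one_map_C_add_one_sub_X_smul]
  have hYe : Y.map (eval 1) = Matrix.diagonal fun i => (u : ℤ_[ℓ]) * (ℓ : ℤ_[ℓ]) ^ (m - mi i) := by
    refine Matrix.eq_of_mul_diagonal_eq_mul_diagonal
      (fun i => pow_ne_zero (mi i) (Nat.cast_ne_zero.mpr (Fact.out : ℓ.Prime).ne_zero)) ?_
    rw [Matrix.diagonal_mul_diagonal, ← hXe, ← coe_evalRingHom, ← Matrix.map_mul, hYX]
    ext i j
    rcases eq_or_ne i j with rfl | hij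
    · simp [hgu, mul_assoc, ← pow_add, Nat.sub_add_cancel (hmi i)]
    · simp [hij]
  obtain ⟨Z', hZ'⟩ := Y.exists_eq_map_C_add_one_sub_X_smul
  refine ⟨hdetY, ⟨fun _ => u, Z', by rwa [hYe, Matrix.diagonal_map (map_zero C)] at hZ'⟩, ?_⟩
  exact ⟨(Matrix.cokernelModOneSubXEquivPi hYe).trans
    (AddEquiv.piCongrRight fun i =>
      (PadicInt.quotientSpanUnitMulPowEquivZMod u (m - mi i)).toAddEquiv)⟩

/-- The dual matrix factorization: if `Y * X = g • 1` with `g` monic, `det X = f`,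
`f(1) ≠ 0`, and `X ≡ diag(ℓ^{m_1},…,ℓ^{m_r}) mod (1-t)`, with `m = v_ℓ(g(1))` and each
`m_i ≤ m`, then `f * det Y = g^r`, `Y ≡ diag(ℓ^{m-m_1},…,ℓ^{m-m_r}) mod (1-t)` up to
`ℤ_ℓ`-units, and for `T' = coker Y` one has `T'/(1-t)T' ≅ ⊕_i ℤ/ℓ^{m-m_i}`. -/
theorem dual_matrix_factorization (ℓ : ℕ) [Fact ℓ.Prime] (r : ℕ)
    (X Y : Matrix (Fin r) (Fin r) (Polynomial ℤ_[ℓ]))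
    (g f : Polynomial ℤ_[ℓ]) (hg : g.Monic)
    (hYX : Y * X = g • (1 : Matrix (Fin r) (Fin r) (Polynomial ℤ_[ℓ])))
    (hdet : X.det = f) (hf1 : f.eval 1 ≠ 0) (hg1 : g.eval 1 ≠ 0)
    (m : ℕ) (hm : (g.eval 1).valuation = (m : ℤ))
    (mi : Fin r → ℕ) (hmi : ∀ i, mi i ≤ m)
    (Z : Matrix (Fin r) (Fin r) (Polynomial ℤ_[ℓ]))
    (hX : X = Matrix.diagonal (fun i => (C ((ℓ : ℤ_[ℓ]) ^ mi i) : Polynomial ℤ_[ℓ]))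
      + ((1 - Polynomial.X : Polynomial ℤ_[ℓ])) • Z) :
    f * Y.det = g ^ r ∧
    (∃ (u : Fin r → ℤ_[ℓ]ˣ) (Z' : Matrix (Fin r) (Fin r) (Polynomial ℤ_[ℓ])),
      Y = Matrix.diagonal (fun i => (C ((u i : ℤ_[ℓ]) * (ℓ : ℤ_[ℓ]) ^ (m - mi i))))
        + ((1 - Polynomial.X : Polynomial ℤ_[ℓ])) • Z') ∧
    Nonempty ((((Fin r → Polynomial ℤ_[ℓ]) ⧸ LinearMap.range Y.mulVecLin) ⧸
        ((Ideal.span {(1 - Polynomial.X : Polynomial ℤ_[ℓ])}) •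
          (⊤ : Submodule (Polynomial ℤ_[ℓ])
            ((Fin r → Polynomial ℤ_[ℓ]) ⧸ LinearMap.range Y.mulVecLin)))) ≃+
      Π i : Fin r, ZMod (ℓ ^ (m - mi i))) :=
  dual_matrix_factorization_general ℓ r X Y g f hYX hdet hg1 m hm mi hmi Z hX
end

section
/- Let G be a finite abelian ℓ-group with invariant exponents (m_1 ≤ … ≤ m_r) (padded with zeros so that G is generated by r elements), and let H' ⊆ G be the subgroup generated by elements u_1, …, u_i of orders ℓ^{n_1}, …, ℓ^{n_i}. If G/H' is generated by r − i elements, then there exists an element v = Σ_{j≥i} a_j v_j ∈ H' (where v_j generate the cyclic summands ℤ/ℓ^{m_j}ℤ of G) with some a_j a unit modulo ℓ, where the sum runs over j = i, …, r. -/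
/-! Let `A` be the subgroup of elements supported on `v_i, …, v_r` and `Q = G ⧸ H'`. If every
element of `A ⊓ H'` were `ℓ` times an element of `A`, then on `L = {a ∈ A | ℓ • a ∈ H'}` the
kernel of `L → Q` would lie in `ℓ • L`, so `|A[ℓ]| = |L ⧸ ℓ • L| ≤ |L ⧸ (L ⊓ H')| ≤ |Q[ℓ]|`.
When all of these summands are nontrivial, `A[ℓ]` has `ℓ ^ (r - i + 1)` elements, whereas
`|Q[ℓ]| = |Q ⧸ ℓ • Q| ≤ ℓ ^ (r - i)` because `Q ⧸ ℓ • Q` is an `𝔽_ℓ`-space spanned by `r - i`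
vectors. -/

open AddSubgroup Finset

section Torsion

variable {G : Type*} [AddCommGroup G]

theorem torsionBy_natCast_eq_ker_nsmul (p : ℕ) : torsionBy G p = (nsmulAddMonoidHom p).ker := by
  ext x
  simp

theorem card_torsionBy_le_card_range_of_ker_le [Finite G] {Q : Type*} [AddGroup Q] (p : ℕ)
    (φ : G →+ Q) (hφ : φ.ker ≤ (nsmulAddMonoidHom p).range) :
    Nat.card (torsionBy G p) ≤ Nat.card φ.range := by
  rw [torsionBy_natCast_eq_ker_nsmul, ← index_range, ← index_ker]
  exact index_antitone hφ

theorem card_inf_torsionBy_le_card_torsionBy_quotient [Finite G] (p : ℕ) (A H : AddSubgroup G)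
    (hAH : A ⊓ H ≤ A.map (nsmulAddMonoidHom p)) :
    Nat.card ↥(A ⊓ torsionBy G p) ≤ Nat.card (torsionBy (G ⧸ H) p) := by
  set L := A ⊓ (torsionBy (G ⧸ H) p).comap (QuotientAddGroup.mk' H)
  set φ := (QuotientAddGroup.mk' H).comp L.subtype
  have hker : φ.ker ≤ (nsmulAddMonoidHom p).range := by
    rintro ⟨x, hxA, _⟩ hx
    have hxH : x ∈ H := by simpa [φ] using hx
    obtain ⟨a, haA, rfl⟩ := hAH ⟨hxA, hxH⟩
    refine ⟨⟨a, haA, ?_⟩, rfl⟩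
    simpa [← QuotientAddGroup.mk_nsmul] using hxH
  have hrange : φ.range ≤ torsionBy (G ⧸ H) p := by
    rintro _ ⟨⟨x, -, hx⟩, rfl⟩
    exact hx
  have htors : ∀ x : ↥(A ⊓ torsionBy G p), p • (x : G) = 0 :=
    fun x => torsionBy.nsmul_iff.mp x.2.2
  calc Nat.card ↥(A ⊓ torsionBy G p)
      ≤ Nat.card (torsionBy L p) := by
        refine Nat.card_le_card_of_injective
          (fun x => ⟨⟨x, x.2.1, ?_⟩, torsionBy.nsmul_iff.mpr (Subtype.ext (htors x))⟩)
          fun x y hxy => ?_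
        · simp [← QuotientAddGroup.mk_nsmul, htors x]
        · simpa using congrArg (fun y : torsionBy L p => ((y : L) : G)) hxy
    _ ≤ Nat.card φ.range := card_torsionBy_le_card_range_of_ker_le p φ hker
    _ ≤ Nat.card (torsionBy (G ⧸ H) p) := card_le_of_le hrange

theorem index_le_pow_of_closure_eq_top {ι : Type*} [Fintype ι] (p : ℕ) [NeZero p] (w : ι → G)
    (hw : AddSubgroup.closure (Set.range w) = ⊤) (N : AddSubgroup G) (hN : ∀ x, p • x ∈ N) :
    N.index ≤ p ^ Fintype.card ι := by
  have hpN : ∀ x : G ⧸ N, p • x = 0 := by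
    rintro ⟨x⟩
    exact (QuotientAddGroup.eq_zero_iff _).mpr (hN x)
  have : Module (ZMod p) (G ⧸ N) := AddCommGroup.zmodModule hpN
  have hspan : Submodule.span (ZMod p) (Set.range (QuotientAddGroup.mk' N ∘ w)) =
      (⊤ : Submodule (ZMod p) (G ⧸ N)) := by
    rw [eq_top_iff, ← Submodule.restrictScalars_le ℤ, Submodule.restrictScalars_top]
    refine le_trans ?_ (Submodule.span_le_restrictScalars ℤ (ZMod p) _)
    rw [← Submodule.toAddSubgroup_le, Submodule.span_int_eq_addSubgroupClosure, Set.range_comp,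
      ← AddMonoidHom.map_closure, hw, map_top_of_surjective _ (QuotientAddGroup.mk'_surjective _)]
    rfl
  have hsurj :
      Function.Surjective (Fintype.linearCombination (ZMod p) (QuotientAddGroup.mk' N ∘ w)) := by
    rw [← LinearMap.range_eq_top, Fintype.range_linearCombination, hspan]
  calc N.index ≤ Nat.card (ι → ZMod p) := Nat.card_le_card_of_surjective _ hsurj
    _ = p ^ Fintype.card ι := by rw [Nat.card_fun, Nat.card_zmod, Nat.card_eq_fintype_card]

theorem card_torsionBy_le_pow_of_closure_eq_top [Finite G] {ι : Type*} [Fintype ι] (p : ℕ)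
    [NeZero p] (w : ι → G) (hw : AddSubgroup.closure (Set.range w) = ⊤) :
    Nat.card (torsionBy G p) ≤ p ^ Fintype.card ι := by
  rw [torsionBy_natCast_eq_ker_nsmul, ← index_range]
  exact index_le_pow_of_closure_eq_top p w hw _ fun x => ⟨x, rfl⟩

end Torsion

theorem ZMod.addOrderOf_natCast_pow_pred {p : ℕ} (hp : p ≠ 0) {k : ℕ} (hk : k ≠ 0) :
    addOrderOf ((p ^ (k - 1) : ℕ) : ZMod (p ^ k)) = p := by
  have hpow : p ^ k = p ^ (k - 1) * p := by rw [← pow_succ, Nat.sub_add_cancel (by omega)]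
  rw [ZMod.addOrderOf_coe' _ (pow_ne_zero _ hp), hpow, Nat.gcd_mul_right_left,
    Nat.mul_div_cancel_left _ (pow_pos (Nat.pos_of_ne_zero hp) _)]

/-- Coordinate `j : Fin r` carries the paper's generator `v_{j+1}`, so this is the subgroup
spanned by `v_i, …, v_r`. -/
def supportedFrom {r : ℕ} (ℓ : ℕ) (m : Fin r → ℕ) (i : ℕ) :
    AddSubgroup (Π j : Fin r, ZMod (ℓ ^ m j)) :=
  AddSubgroup.pi {j | (j : ℕ) + 1 < i} fun _ => ⊥

section Coordinates

variable {ℓ r : ℕ} {m : Fin r → ℕ}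

theorem mem_supportedFrom {i : ℕ} {x : Π j : Fin r, ZMod (ℓ ^ m j)} :
    x ∈ supportedFrom ℓ m i ↔ ∀ j : Fin r, (j : ℕ) + 1 < i → x j = 0 := by
  simp [supportedFrom, AddSubgroup.mem_pi]

theorem mem_map_nsmul_supportedFrom_of_forall_dvd_val [NeZero ℓ] {i : ℕ}
    {x : Π j : Fin r, ZMod (ℓ ^ m j)} (hx : x ∈ supportedFrom ℓ m i)
    (hdvd : ∀ j, ℓ ∣ (x j).val) : x ∈ (supportedFrom ℓ m i).map (nsmulAddMonoidHom ℓ) := by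
  refine ⟨fun j => ((x j).val / ℓ : ℕ), mem_supportedFrom.mpr fun j hj => ?_, funext fun j => ?_⟩
  · simp [mem_supportedFrom.mp hx j hj]
  · simp [nsmul_eq_mul, ← Nat.cast_mul, Nat.mul_div_cancel' (hdvd j)]

theorem Fin.card_filter_le_val_add_one {r i : ℕ} (hi : 1 ≤ i) :
    #{j : Fin r | i ≤ (j : ℕ) + 1} = r + 1 - i := by
  have hlow : #{j : Fin r | (j : ℕ) < i - 1} = min r (i - 1) := Fin.card_filter_val_lt
  have hsplit := card_filter_add_card_filter_not (s := univ) fun j : Fin r => (j : ℕ) < i - 1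
  rw [card_univ, Fintype.card_fin, hlow,
    filter_congr (q := fun j : Fin r => i ≤ (j : ℕ) + 1) fun j _ => by omega] at hsplit
  omega

theorem pow_le_card_supportedFrom_inf_torsionBy [NeZero ℓ] {i : ℕ} (hi : 1 ≤ i)
    (hm : ∀ j : Fin r, i ≤ (j : ℕ) + 1 → m j ≠ 0) :
    ℓ ^ (r + 1 - i) ≤ Nat.card ↥(supportedFrom ℓ m i ⊓ torsionBy _ ℓ) := by
  classical
  set e : Π j : Fin r, ZMod (ℓ ^ m j) := fun j => ((ℓ ^ (m j - 1) : ℕ) : ZMod (ℓ ^ m j))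
  set F : ({j : Fin r // i ≤ (j : ℕ) + 1} → ZMod ℓ) → Π j : Fin r, ZMod (ℓ ^ m j) := fun c j =>
    if h : i ≤ (j : ℕ) + 1 then (c ⟨j, h⟩).val • e j else 0
  have he : ∀ j : Fin r, i ≤ (j : ℕ) + 1 → addOrderOf (e j) = ℓ := fun j hj =>
    ZMod.addOrderOf_natCast_pow_pred (NeZero.ne ℓ) (hm j hj)
  have hF : ∀ c, F c ∈ supportedFrom ℓ m i ⊓ torsionBy _ ℓ := by
    refine fun c => ⟨mem_supportedFrom.mpr fun j hj => dif_neg (by omega),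
      torsionBy.nsmul_iff.mpr (funext fun j => ?_)⟩
    by_cases hj : i ≤ (j : ℕ) + 1
    · simp only [F, dif_pos hj, Pi.smul_apply, Pi.zero_apply]
      have hℓe : ℓ • e j = 0 := by simpa only [he j hj] using addOrderOf_nsmul_eq_zero (e j)
      rw [smul_comm, hℓe, smul_zero]
    · simp [F, hj]
  have hFinj : Function.Injective F := by
    intro c c' h
    funext s
    have hs := congrFun h s
    simp only [F, dif_pos s.2, nsmul_inj_mod, he s s.2, Nat.mod_eq_of_lt (ZMod.val_lt _)] at hs
    exact ZMod.val_injective ℓ hs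
  calc ℓ ^ (r + 1 - i) = Nat.card ({j : Fin r // i ≤ (j : ℕ) + 1} → ZMod ℓ) := by
        rw [Nat.card_fun, Nat.card_zmod, Nat.card_eq_fintype_card, Fintype.card_subtype,
          Fin.card_filter_le_val_add_one hi]
    _ ≤ _ := Nat.card_le_card_of_injective (fun c => ⟨F c, hF c⟩)
        fun c c' h => hFinj (congrArg Subtype.val h)

theorem exists_mem_supportedFrom_not_dvd_val (hℓ : 1 < ℓ) {i : ℕ} (hi : 1 ≤ i)
    (hm : ∀ j : Fin r, i ≤ (j : ℕ) + 1 → m j ≠ 0) (H : AddSubgroup (Π j : Fin r, ZMod (ℓ ^ m j)))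
    {ι : Type*} [Fintype ι] (w : ι → (Π j : Fin r, ZMod (ℓ ^ m j)) ⧸ H)
    (hw : AddSubgroup.closure (Set.range w) = ⊤) (hι : Fintype.card ι < r + 1 - i) :
    ∃ x ∈ H, x ∈ supportedFrom ℓ m i ∧ ∃ j, ¬ ℓ ∣ (x j).val := by
  have : NeZero ℓ := ⟨by omega⟩
  by_contra! hdvd
  have hAH : supportedFrom ℓ m i ⊓ H ≤ (supportedFrom ℓ m i).map (nsmulAddMonoidHom ℓ) :=
    fun x hx => mem_map_nsmul_supportedFrom_of_forall_dvd_val hx.1 (hdvd x hx.2 hx.1)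
  have hcard : ℓ ^ (r + 1 - i) ≤ ℓ ^ Fintype.card ι := calc
    ℓ ^ (r + 1 - i) ≤ Nat.card ↥(supportedFrom ℓ m i ⊓ torsionBy _ ℓ) :=
        pow_le_card_supportedFrom_inf_torsionBy hi hm
    _ ≤ Nat.card (torsionBy (_ ⧸ H) ℓ) := card_inf_torsionBy_le_card_torsionBy_quotient ℓ _ _ hAH
    _ ≤ ℓ ^ Fintype.card ι := card_torsionBy_le_pow_of_closure_eq_top ℓ w hw
  exact (Nat.pow_lt_pow_right hℓ hι).not_ge hcard

theorem sum_val_smul_single {ι : Type*} [Fintype ι] [DecidableEq ι] {n : ι → ℕ}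
    [∀ j, NeZero (n j)] (x : Π j, ZMod (n j)) :
    ∑ j, ((x j).val : ℤ) • Pi.single j (1 : ZMod (n j)) = x := by
  refine (Finset.sum_congr rfl fun j _ => ?_).trans (Finset.univ_sum_single x)
  rw [← Pi.single_smul, natCast_zsmul, nsmul_one, ZMod.natCast_zmod_val]

end Coordinates

theorem exists_unit_combination_in_subgroup_general (ℓ : ℕ) (hℓ : ℓ.Prime)
    (r : ℕ) (m : Fin r → ℕ)
    (i : ℕ) (hi1 : 1 ≤ i) (hir : i ≤ r)
    (H' : AddSubgroup (Π j : Fin r, ZMod (ℓ ^ m j)))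
    (hquot : ∃ w : Fin (r - i) → ((Π j : Fin r, ZMod (ℓ ^ m j)) ⧸ H'),
      AddSubgroup.closure (Set.range w) = ⊤) :
    ∃ a : Fin r → ℤ,
      (∀ j : Fin r, (j : ℕ) + 1 < i → a j = 0) ∧
      (∃ j : Fin r, i ≤ (j : ℕ) + 1 ∧ ¬ ((ℓ : ℤ) ∣ a j)) ∧
      (∑ j : Fin r, a j • Pi.single j (1 : ZMod (ℓ ^ m j))) ∈ H' := by
  have : NeZero ℓ := ⟨hℓ.ne_zero⟩
  by_cases hm : ∃ j : Fin r, i ≤ (j : ℕ) + 1 ∧ m j = 0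
  · -- the summand `j₀` is trivial, so `v_{j₀} = 0 ∈ H'` already has a unit coefficient
    obtain ⟨j₀, hj₀, hmj₀⟩ := hm
    refine ⟨Pi.single j₀ 1, fun j hj => Pi.single_eq_of_ne (by rintro rfl; omega) _,
      ⟨j₀, hj₀, by rw [Pi.single_eq_same]; exact_mod_cast hℓ.not_dvd_one⟩, ?_⟩
    have hv : (1 : ZMod (ℓ ^ m j₀)) = 0 := ZMod.one_eq_zero_iff.mpr (by rw [hmj₀, pow_zero])
    simp [Pi.single_apply, hv]
  · push Not at hm
    obtain ⟨w, hw⟩ := hquot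
    obtain ⟨x, hxH, hx, j, hj⟩ := exists_mem_supportedFrom_not_dvd_val hℓ.one_lt hi1 hm H' w hw
      (by rw [Fintype.card_fin]; omega)
    have hj_top : i ≤ (j : ℕ) + 1 := by
      by_contra hlow
      exact hj (by simp [mem_supportedFrom.mp hx j (by omega)])
    refine ⟨fun j => (x j).val, fun j hj => by simp [mem_supportedFrom.mp hx j hj],
      ⟨j, hj_top, Int.natCast_dvd_natCast.not.mpr hj⟩, ?_⟩
    rwa [sum_val_smul_single]

/-- Combinatorial kernel of the key lemma: let `G = ⊕_{j=1}^r ℤ/ℓ^{m_j}` with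
`m_1 ≤ … ≤ m_r` and standard generators `v_j`, and let `H' ⊆ G` be generated by
`u_1, …, u_i` of orders `ℓ^{n_1}, …, ℓ^{n_i}`.  If `G/H'` is generated by `r - i`
elements, then `H'` contains an element `v = Σ_{j ≥ i} a_j v_j` (supported on the top
coordinates) with some coefficient `a_j` a unit modulo `ℓ`. -/
theorem exists_unit_combination_in_subgroup (ℓ : ℕ) (hℓ : ℓ.Prime)
    (r : ℕ) (m : Fin r → ℕ) (hm : Monotone m)
    (i : ℕ) (hi1 : 1 ≤ i) (hir : i ≤ r)
    (u : Fin i → (Π j : Fin r, ZMod (ℓ ^ m j)))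
    (n : Fin i → ℕ) (hord : ∀ j : Fin i, addOrderOf (u j) = ℓ ^ n j)
    (H' : AddSubgroup (Π j : Fin r, ZMod (ℓ ^ m j)))
    (hH' : H' = AddSubgroup.closure (Set.range u))
    (hquot : ∃ w : Fin (r - i) → ((Π j : Fin r, ZMod (ℓ ^ m j)) ⧸ H'),
      AddSubgroup.closure (Set.range w) = ⊤) :
    ∃ a : Fin r → ℤ,
      (∀ j : Fin r, (j : ℕ) + 1 < i → a j = 0) ∧
      (∃ j : Fin r, i ≤ (j : ℕ) + 1 ∧ ¬ ((ℓ : ℤ) ∣ a j)) ∧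
      (∑ j : Fin r, a j • Pi.single j (1 : ZMod (ℓ ^ m j))) ∈ H' :=
  exists_unit_combination_in_subgroup_general ℓ hℓ r m i hi1 hir H' hquot
end

section
/- Let ℓ be a prime, P ∈ ℤ_ℓ[t] monic of degree 2 with P(1) ≠ 0, m = v_ℓ(P(1)), and λ_1 ≤ λ_2 the valuations of the roots of P(1−t). Given integers 0 ≤ m_1 ≤ m_2 with m_1 + m_2 = m and m_1 ≤ λ_1, there exists a ℤ_ℓ[t]-module T, free of rank 2 over ℤ_ℓ, with characteristic polynomial of t equal to P, such that T/(1−t)T ≅ ℤ/ℓ^{m_1}ℤ ⊕ ℤ/ℓ^{m_2}ℤ. -/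
/-!
Write `P = t² + a₁ t + a₀`, so that `P(1 - t) = t² - (2 + a₁) t + P(1)`. The hypothesis
`m₁ ≤ λ₁` gives `2 + a₁ = ℓ^{m₁} b`, and `P(1) = ε ℓ^{m₁} ℓ^{m₂}` with `ε` a unit. Let `t` act on
`ℤ_ℓ²` by `M = [[-1 - a₁, ε ℓ^{m₂}], [-ℓ^{m₁}, 1]]`: its trace is `-a₁` and its determinant is
`-1 - a₁ + P(1) = a₀`, while `1 - M = [[b ℓ^{m₁}, -ε ℓ^{m₂}], [ℓ^{m₁}, 0]]` has cokernel
`ℤ_ℓ/ℓ^{m₁} × ℤ_ℓ/ℓ^{m₂}`, realised by `v ↦ (v₁ mod ℓ^{m₁}, v₀ - b v₁ mod ℓ^{m₂})`.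
-/

open Polynomial
open scoped Classical

section Cokernel

variable {R : Type*} [CommRing R]

noncomputable def cokernelMap (b x y : R) :
    (Fin 2 → R) →ₗ[R] (R ⧸ Ideal.span {x}) × (R ⧸ Ideal.span {y}) :=
  ((Ideal.span {x}).mkQ ∘ₗ LinearMap.proj 1).prod
    ((Ideal.span {y}).mkQ ∘ₗ (LinearMap.proj 0 - b • LinearMap.proj 1))

theorem cokernelMap_surjective (b x y : R) : Function.Surjective (cokernelMap b x y) := by
  rintro ⟨s, t⟩
  obtain ⟨s, rfl⟩ := Submodule.mkQ_surjective _ s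
  obtain ⟨t, rfl⟩ := Submodule.mkQ_surjective _ t
  refine ⟨![t + b * s, s], ?_⟩
  simp [cokernelMap]

theorem cokernelMap_eq_zero_iff {b x y : R} {v : Fin 2 → R} :
    cokernelMap b x y v = 0 ↔ x ∣ v 1 ∧ y ∣ v 0 - b * v 1 := by
  simp [cokernelMap, Ideal.Quotient.eq_zero_iff_dvd, -map_mul, -map_sub]

theorem range_toLin'_eq_ker_cokernelMap (b x y : R) (e : Rˣ) :
    LinearMap.range (Matrix.toLin' !![b * x, -(e * y); x, 0]) =
      LinearMap.ker (cokernelMap b x y) := by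
  ext v
  rw [LinearMap.mem_ker, cokernelMap_eq_zero_iff]
  constructor
  · rintro ⟨w, rfl⟩
    simp only [Matrix.toLin'_apply, Matrix.mulVec_fin_two]
    refine ⟨⟨w 0, by simp⟩, ⟨-(e * w 1), by simp; ring⟩⟩
  · rintro ⟨⟨s, hs⟩, ⟨r, hr⟩⟩
    refine ⟨![s, -(↑e⁻¹ * r)], ?_⟩
    ext i
    fin_cases i
    · simp
      linear_combination (-hr) - b * hs + r * y * e.inv_mul
    · simp [hs, mul_comm]

noncomputable def cokernelEquiv (b x y : R) (e : Rˣ) :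
    ((Fin 2 → R) ⧸ LinearMap.range (Matrix.toLin' !![b * x, -(e * y); x, 0])) ≃ₗ[R]
      (R ⧸ Ideal.span {x}) × (R ⧸ Ideal.span {y}) :=
  (Submodule.quotEquivOfEq _ _ (range_toLin'_eq_ker_cokernelMap b x y e)).trans
    ((cokernelMap b x y).quotKerEquivOfSurjective (cokernelMap_surjective b x y))

end Cokernel

noncomputable def PadicInt.quotientSpanPowEquiv {p : ℕ} [Fact p.Prime] (n : ℕ) :
    ℤ_[p] ⧸ Ideal.span {(p : ℤ_[p]) ^ n} ≃+* ZMod (p ^ n) :=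
  (Ideal.quotEquivOfEq (PadicInt.ker_toZModPow n).symm).trans
    (RingHom.quotientKerEquivOfSurjective (ZMod.ringHom_surjective _))

theorem PadicInt.pow_dvd_of_le_valuation {p : ℕ} [Fact p.Prime] {x : ℤ_[p]} {n : ℕ}
    (h : n ≤ x.valuation) : (p : ℤ_[p]) ^ n ∣ x := by
  rcases eq_or_ne x 0 with rfl | hx
  · exact dvd_zero _
  · exact Ideal.mem_span_singleton.mp ((PadicInt.mem_span_pow_iff_le_valuation x hx n).mpr h)

theorem Polynomial.Monic.eq_X_sq_add {R : Type*} [CommRing R] {P : R[X]} (hP : P.Monic)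
    (h : P.natDegree = 2) :
    P = X ^ 2 + C (P.coeff 1) * X + C (P.coeff 0) := by
  rw [hP.as_sum, h]
  simp [Finset.sum_range_succ]
  ring

theorem Polynomial.coeff_one_comp_one_sub_X {R : Type*} [CommRing R] (a₁ a₀ : R) :
    ((X ^ 2 + C a₁ * X + C a₀).comp (1 - X)).coeff 1 = -(2 + a₁) := by
  simp [sub_sq, coeff_X, coeff_one, mul_sub]
  ring

theorem exists_matrix_charpoly_eq_and_one_sub_eq {R : Type*} [CommRing R] [Nontrivial R]
    {a₁ a₀ b x y : R} (e : R) (hb : 2 + a₁ = x * b) (heval : 1 + a₁ + a₀ = e * x * y) :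
    ∃ M : Matrix (Fin 2) (Fin 2) R,
      M.charpoly = X ^ 2 + C a₁ * X + C a₀ ∧ 1 - M = !![b * x, -(e * y); x, 0] := by
  refine ⟨!![-1 - a₁, e * y; -x, 1], ?_, ?_⟩
  · have htrace : Matrix.trace !![-1 - a₁, e * y; -x, 1] = -a₁ := by
      rw [Matrix.trace_fin_two_of]
      ring
    have hdet : Matrix.det !![-1 - a₁, e * y; -x, 1] = a₀ := by
      rw [Matrix.det_fin_two_of]
      linear_combination -heval
    rw [Matrix.charpoly_fin_two, htrace, hdet, map_neg, neg_mul, sub_neg_eq_add]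
  · ext i j
    fin_cases i <;> fin_cases j <;> simp
    linear_combination hb

theorem rank_two_module_exists_general (ℓ : ℕ) [Fact ℓ.Prime]
    (P : Polynomial ℤ_[ℓ]) (hP : P.Monic) (hdeg : P.natDegree = 2) (hP1 : P.eval 1 ≠ 0)
    (m : ℕ) (hm : (P.eval 1).valuation = (m : ℤ))
    (lam1 : ℚ)
    (hlam1 : lam1 = if (P.comp (1 - Polynomial.X)).coeff 1 = 0 then (m : ℚ) / 2
      else min ((((P.comp (1 - Polynomial.X)).coeff 1).valuation : ℚ)) ((m : ℚ) / 2))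
    (m₁ m₂ : ℕ) (hsum : m₁ + m₂ = m) (hle : (m₁ : ℚ) ≤ lam1) :
    ∃ (T : Type) (_ : AddCommGroup T) (_ : Module ℤ_[ℓ] T)
      (_ : Module.Free ℤ_[ℓ] T) (_ : Module.Finite ℤ_[ℓ] T)
      (φ : T →ₗ[ℤ_[ℓ]] T),
      Module.finrank ℤ_[ℓ] T = 2 ∧ LinearMap.charpoly φ = P ∧
      Nonempty ((T ⧸ LinearMap.range (LinearMap.id - φ)) ≃+
        (ZMod (ℓ ^ m₁) × ZMod (ℓ ^ m₂))) := by
  have hdvd : (ℓ : ℤ_[ℓ]) ^ m₁ ∣ (P.comp (1 - X)).coeff 1 := by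
    split_ifs at hlam1 with h
    · rw [h]; exact dvd_zero _
    · subst hlam1
      exact PadicInt.pow_dvd_of_le_valuation (by exact_mod_cast hle.trans (min_le_left _ _))
  obtain ⟨ε, hε⟩ : ∃ ε : ℤ_[ℓ]ˣ, P.eval 1 = ε * (ℓ : ℤ_[ℓ]) ^ m :=
    ⟨_, by simpa [show (P.eval 1).valuation = m by exact_mod_cast hm]
      using PadicInt.unitCoeff_spec hP1⟩
  set a₁ := P.coeff 1
  set a₀ := P.coeff 0
  have hPX : P = X ^ 2 + C a₁ * X + C a₀ := hP.eq_X_sq_add hdeg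
  rw [hPX, coeff_one_comp_one_sub_X, dvd_neg] at hdvd
  obtain ⟨b, hb⟩ := hdvd
  set x := (ℓ : ℤ_[ℓ]) ^ m₁
  set y := (ℓ : ℤ_[ℓ]) ^ m₂
  have heval : 1 + a₁ + a₀ = ε * x * y := by
    rw [← hsum, pow_add, hPX] at hε
    simpa [mul_assoc] using hε
  obtain ⟨M, hM, h1M⟩ := exists_matrix_charpoly_eq_and_one_sub_eq (ε : ℤ_[ℓ]) hb heval
  refine ⟨Fin 2 → ℤ_[ℓ], inferInstance, inferInstance, inferInstance, inferInstance,
    Matrix.toLin' M, Module.finrank_fin_fun _, by rw [Matrix.charpoly_toLin', hM, hPX], ?_⟩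
  rw [← Matrix.toLin'_one, ← map_sub, h1M]
  exact ⟨(cokernelEquiv b x y ε).toAddEquiv.trans
    ((PadicInt.quotientSpanPowEquiv m₁).toAddEquiv.prodCongr
      (PadicInt.quotientSpanPowEquiv m₂).toAddEquiv)⟩

/-- Rank-2 existence theorem: given monic `P ∈ ℤ_ℓ[t]` of degree 2 with `P(1) ≠ 0`,
`m = v_ℓ(P(1))`, `λ₁` the smaller Newton-polygon slope of `P(1-t)`, and integers
`0 ≤ m₁ ≤ m₂` with `m₁ + m₂ = m` and `m₁ ≤ λ₁`, there exists a `ℤ_ℓ[t]`-module `T`,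
free of rank 2 over `ℤ_ℓ`, with characteristic polynomial of `t` equal to `P` and
`T/(1-t)T ≅ ℤ/ℓ^{m₁} ⊕ ℤ/ℓ^{m₂}`. -/
theorem rank_two_module_exists (ℓ : ℕ) [Fact ℓ.Prime]
    (P : Polynomial ℤ_[ℓ]) (hP : P.Monic) (hdeg : P.natDegree = 2) (hP1 : P.eval 1 ≠ 0)
    (m : ℕ) (hm : (P.eval 1).valuation = (m : ℤ))
    (lam1 : ℚ)
    (hlam1 : lam1 = if (P.comp (1 - Polynomial.X)).coeff 1 = 0 then (m : ℚ) / 2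
      else min ((((P.comp (1 - Polynomial.X)).coeff 1).valuation : ℚ)) ((m : ℚ) / 2))
    (m₁ m₂ : ℕ) (h12 : m₁ ≤ m₂) (hsum : m₁ + m₂ = m) (hle : (m₁ : ℚ) ≤ lam1) :
    ∃ (T : Type) (_ : AddCommGroup T) (_ : Module ℤ_[ℓ] T)
      (_ : Module.Free ℤ_[ℓ] T) (_ : Module.Finite ℤ_[ℓ] T)
      (φ : T →ₗ[ℤ_[ℓ]] T),
      Module.finrank ℤ_[ℓ] T = 2 ∧ LinearMap.charpoly φ = P ∧
      Nonempty ((T ⧸ LinearMap.range (LinearMap.id - φ)) ≃+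
        (ZMod (ℓ ^ m₁) × ZMod (ℓ ^ m₂))) :=
  rank_two_module_exists_general ℓ P hP hdeg hP1 m hm lam1 hlam1 m₁ m₂ hsum hle
end

section
/- Let ℓ be a prime and G a finite abelian ℓ-group with ordered exponent sequence (m_1,…,m_r) (so G ≅ ⊕ℤ/ℓ^{m_i}ℤ, m_1 ≤ … ≤ m_r, zeros allowed). If H ⊆ G is a subgroup generated by 2 elements with exponent sequence (n_1, n_2) such that G/H is generated by r−2 elements, then m_1 ≤ n_1 and m_2 ≤ n_2. -/
lemma zmod_cast_eq_zero_of_smul {ℓ : ℕ} (hℓ : ℓ.Prime) {k M : ℕ} (hkM : k < M)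
    (u : ZMod (ℓ ^ M)) (hu : ℓ ^ k • u = 0) : ((u.val : ℕ) : ZMod ℓ) = 0 := by
  haveI : NeZero (ℓ ^ M) := ⟨pow_ne_zero _ hℓ.ne_zero⟩
  have h1 : ((ℓ ^ k * u.val : ℕ) : ZMod (ℓ ^ M)) = 0 := by
    push_cast
    rw [ZMod.natCast_val, ZMod.cast_id]
    rw [nsmul_eq_mul] at hu
    push_cast at hu
    exact hu
  have h2 : ℓ ^ M ∣ ℓ ^ k * u.val := (ZMod.natCast_eq_zero_iff _ _).1 h1
  have h3 : ℓ ^ k * ℓ ∣ ℓ ^ k * u.val := by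
    calc ℓ ^ k * ℓ = ℓ ^ (k + 1) := (pow_succ ℓ k).symm
    _ ∣ ℓ ^ M := pow_dvd_pow ℓ hkM
    _ ∣ _ := h2
  have h4 : ℓ ∣ u.val := (Nat.mul_dvd_mul_iff_left (pow_pos hℓ.pos k)).1 h3
  exact (ZMod.natCast_eq_zero_iff _ _).2 h4

lemma key_aux {ℓ : ℕ} (hℓ : ℓ.Prime) {G : Type} [AddCommGroup G]
    {ι κ : Type} [Fintype ι] [Fintype κ] [DecidableEq ι] [DecidableEq κ]
    (θ : G →+ (ι → ZMod ℓ)) (hsurj : Function.Surjective θ)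
    (k : ℕ) (hker : ∀ u : G, ℓ ^ k • u = 0 → θ u = 0)
    (c : κ → G)
    (hT : ∀ x : G, ∃ x' ∈ AddSubgroup.closure (Set.range c), ℓ ^ k • (x - x') = 0) :
    Fintype.card ι ≤ Fintype.card κ := by
  haveI : Fact ℓ.Prime := ⟨hℓ⟩
  haveI : NeZero ℓ := ⟨hℓ.ne_zero⟩
  have hspan : ∀ v : ι → ZMod ℓ,
      v ∈ Submodule.span (ZMod ℓ) (Set.range (fun j => θ (c j))) := by
    intro v
    obtain ⟨x, rfl⟩ := hsurj v
    obtain ⟨x', hx', hxx'⟩ := hT x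
    have h1 : θ x = θ x' := by
      have h0 := hker _ hxx'
      rw [map_sub, sub_eq_zero] at h0
      exact h0
    rw [h1]
    have hle : AddSubgroup.closure (Set.range c) ≤
        AddSubgroup.comap θ
          (Submodule.span (ZMod ℓ) (Set.range (fun j => θ (c j)))).toAddSubgroup := by
      rw [AddSubgroup.closure_le]
      rintro t ⟨j, rfl⟩
      exact Submodule.subset_span ⟨j, rfl⟩
    exact hle hx'
  have hLsurj : Function.Surjective (fun a : κ → ZMod ℓ => ∑ j, a j • θ (c j)) := by
    intro v
    obtain ⟨a, ha⟩ := (Submodule.mem_span_range_iff_exists_fun (ZMod ℓ)).1 (hspan v)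
    exact ⟨a, ha⟩
  have hcard := Fintype.card_le_of_surjective _ hLsurj
  rw [Fintype.card_fun, Fintype.card_fun, ZMod.card] at hcard
  exact (Nat.pow_le_pow_iff_right hℓ.one_lt).1 hcard

/-- The `s = 2` case of the key lemma: let `G` be a finite abelian `ℓ`-group with ordered
exponent sequence `(m_1,…,m_r)` and `H ⊆ G` a subgroup with `H ≅ ℤ/ℓ^{n₁} ⊕ ℤ/ℓ^{n₂}`
(`n₁ ≤ n₂`) such that `G/H` is generated by `r - 2` elements.  Then `m₁ ≤ n₁` and
`m₂ ≤ n₂`. -/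
theorem key_lemma_two_generators (ℓ : ℕ) (hℓ : ℓ.Prime)
    (G : Type) [AddCommGroup G] [Finite G]
    (r : ℕ) (hr : 2 ≤ r) (m : Fin r → ℕ) (hm : Monotone m)
    (eG : G ≃+ Π i : Fin r, ZMod (ℓ ^ m i))
    (H : AddSubgroup G) (n₁ n₂ : ℕ) (hn : n₁ ≤ n₂)
    (eH : Nonempty (H ≃+ (ZMod (ℓ ^ n₁) × ZMod (ℓ ^ n₂))))
    (hquot : ∃ w : Fin (r - 2) → (G ⧸ H), AddSubgroup.closure (Set.range w) = ⊤) :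
    m ⟨0, by omega⟩ ≤ n₁ ∧ m ⟨1, by omega⟩ ≤ n₂ := by
  haveI : Fact ℓ.Prime := ⟨hℓ⟩
  haveI : NeZero ℓ := ⟨hℓ.ne_zero⟩
  haveI : NeZero (ℓ ^ n₁) := ⟨pow_ne_zero _ hℓ.ne_zero⟩
  haveI : NeZero (ℓ ^ n₂) := ⟨pow_ne_zero _ hℓ.ne_zero⟩
  obtain ⟨e⟩ := eH
  obtain ⟨w, hw⟩ := hquot
  choose g hg using fun j => QuotientAddGroup.mk'_surjective H (w j)
  set y₁ : G := H.subtype (e.symm (1, 0)) with hy₁def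
  set y₂ : G := H.subtype (e.symm (0, 1)) with hy₂def
  -- decomposition of G
  have hdecomp : ∀ x : G, ∃ h : H, ∃ z ∈ AddSubgroup.closure (Set.range g),
      x = (h : G) + z := by
    intro x
    have hmap : AddSubgroup.map (QuotientAddGroup.mk' H)
        (AddSubgroup.closure (Set.range g)) = ⊤ := by
      rw [AddMonoidHom.map_closure]
      have himg : (QuotientAddGroup.mk' H) '' Set.range g = Set.range w := by
        rw [← Set.range_comp]
        exact congrArg _ (funext hg)
      rw [himg, hw]
    have hx : QuotientAddGroup.mk' H x ∈ AddSubgroup.map (QuotientAddGroup.mk' H)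
        (AddSubgroup.closure (Set.range g)) := by rw [hmap]; trivial
    obtain ⟨z, hz, hzx⟩ := hx
    have hxz : x - z ∈ H := by
      have h1 : -z + x ∈ H := (QuotientAddGroup.eq).1 hzx
      rwa [neg_add_eq_sub] at h1
    exact ⟨⟨x - z, hxz⟩, z, hz, by simp⟩
  -- generators of H
  have hprod : ∀ ab : ZMod (ℓ ^ n₁) × ZMod (ℓ ^ n₂),
      ab = ab.1.val • ((1 : ZMod (ℓ ^ n₁)), (0 : ZMod (ℓ ^ n₂)))
        + ab.2.val • ((0 : ZMod (ℓ ^ n₁)), (1 : ZMod (ℓ ^ n₂))) := by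
    intro ab
    have h1 : ab.1 = ab.1.val • (1 : ZMod (ℓ ^ n₁)) + ab.2.val • (0 : ZMod (ℓ ^ n₁)) := by
      simp [nsmul_eq_mul, ZMod.natCast_zmod_val]
    have h2 : ab.2 = ab.1.val • (0 : ZMod (ℓ ^ n₂)) + ab.2.val • (1 : ZMod (ℓ ^ n₂)) := by
      simp [nsmul_eq_mul, ZMod.natCast_zmod_val]
    exact Prod.ext h1 h2
  have hHmem : ∀ h : H, ∃ p q : ℕ, (h : G) = p • y₁ + q • y₂ := by
    intro h
    refine ⟨(e h).1.val, (e h).2.val, ?_⟩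
    have h1 : h = (e h).1.val • (e.symm (1, 0)) + (e h).2.val • (e.symm (0, 1)) := by
      conv_lhs => rw [← e.symm_apply_apply h]
      rw [← map_nsmul, ← map_nsmul, ← map_add]
      exact congrArg e.symm (hprod (e h))
    have h2 := congrArg H.subtype h1
    rwa [map_add, map_nsmul, map_nsmul] at h2
  -- torsion facts
  have hy₁tor : ℓ ^ n₁ • y₁ = 0 := by
    rw [hy₁def, ← map_nsmul, ← map_nsmul]
    have h0 : ℓ ^ n₁ • ((1 : ZMod (ℓ ^ n₁)), (0 : ZMod (ℓ ^ n₂))) = 0 := by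
      have : ℓ ^ n₁ • (1 : ZMod (ℓ ^ n₁)) = 0 := by
        simp [nsmul_eq_mul, ZMod.natCast_self]
      exact Prod.ext (by simpa using this) (by simp)
    rw [h0, map_zero, map_zero]
  have hy₁tor₂ : ℓ ^ n₂ • y₁ = 0 := by
    have hpow : ℓ ^ (n₂ - n₁) * ℓ ^ n₁ = ℓ ^ n₂ := by
      rw [← pow_add]
      congr 1
      omega
    rw [← hpow, mul_smul, hy₁tor, smul_zero]
  have hy₂tor : ℓ ^ n₂ • y₂ = 0 := by
    rw [hy₂def, ← map_nsmul, ← map_nsmul]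
    have h0 : ℓ ^ n₂ • ((0 : ZMod (ℓ ^ n₁)), (1 : ZMod (ℓ ^ n₂))) = 0 := by
      have : ℓ ^ n₂ • (1 : ZMod (ℓ ^ n₂)) = 0 := by
        simp [nsmul_eq_mul, ZMod.natCast_self]
      exact Prod.ext (by simp) (by simpa using this)
    rw [h0, map_zero, map_zero]
  have hHtor : ∀ h : H, ℓ ^ n₂ • (h : G) = 0 := by
    intro h
    obtain ⟨p, q, hpq⟩ := hHmem h
    rw [hpq, smul_add, smul_comm (ℓ ^ n₂) p, smul_comm (ℓ ^ n₂) q, hy₁tor₂, hy₂tor,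
      smul_zero, smul_zero, add_zero]
  constructor
  · -- m₀ ≤ n₁
    by_contra hcon
    push_neg at hcon
    have hmi : ∀ i : Fin r, n₁ < m i :=
      fun i => lt_of_lt_of_le hcon (hm (by simp [Fin.le_def]))
    let θ : G →+ (Fin r → ZMod ℓ) := AddMonoidHom.mk'
      (fun x i => ZMod.castHom (dvd_pow_self ℓ (lt_of_le_of_lt
        (Nat.zero_le n₁) (hmi i)).ne') (ZMod ℓ) (eG x i))
      (by intro a b; funext i; simp only [map_add, Pi.add_apply])
    have hθ : ∀ (x : G) (i : Fin r),
        θ x i = ((((eG x i).val : ℕ)) : ZMod ℓ) := by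
      intro x i
      haveI : NeZero (ℓ ^ m i) := ⟨pow_ne_zero _ hℓ.ne_zero⟩
      show ZMod.castHom (dvd_pow_self ℓ (lt_of_le_of_lt
        (Nat.zero_le n₁) (hmi i)).ne') (ZMod ℓ) (eG x i) = _
      rw [ZMod.castHom_apply]
      exact (ZMod.natCast_val _).symm
    have hsurj : Function.Surjective θ := by
      intro v
      refine ⟨eG.symm (fun i => (((v i).val : ℕ) : ZMod (ℓ ^ m i))), ?_⟩
      funext i
      haveI : NeZero (ℓ ^ m i) := ⟨pow_ne_zero _ hℓ.ne_zero⟩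
      rw [hθ, AddEquiv.apply_symm_apply]
      have hlt : (v i).val < ℓ ^ m i := lt_of_lt_of_le (ZMod.val_lt _)
        (by calc ℓ = ℓ ^ 1 := (pow_one ℓ).symm
            _ ≤ ℓ ^ m i := Nat.pow_le_pow_right hℓ.pos (by have := hmi i; omega))
      rw [ZMod.val_natCast_of_lt hlt]
      exact ZMod.natCast_zmod_val (v i)
    have hker : ∀ u : G, ℓ ^ n₁ • u = 0 → θ u = 0 := by
      intro u hu
      funext i
      have h1 : ℓ ^ n₁ • (eG u i) = 0 := by
        have := congrArg (fun t => eG t i) hu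
        simpa [map_nsmul] using this
      rw [hθ]
      exact zmod_cast_eq_zero_of_smul hℓ (hmi i) _ h1
    let c : Option (Fin (r - 2)) → G := fun o => o.elim y₂ g
    have hT : ∀ x : G, ∃ x' ∈ AddSubgroup.closure (Set.range c),
        ℓ ^ n₁ • (x - x') = 0 := by
      intro x
      obtain ⟨h, z, hz, rfl⟩ := hdecomp x
      obtain ⟨p, q, hpq⟩ := hHmem h
      refine ⟨q • y₂ + z, ?_, ?_⟩
      · have h1 : y₂ ∈ AddSubgroup.closure (Set.range c) :=
          AddSubgroup.subset_closure ⟨none, rfl⟩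
        have h2 : z ∈ AddSubgroup.closure (Set.range c) :=
          AddSubgroup.closure_mono
            (fun t ht => by obtain ⟨j, rfl⟩ := ht; exact ⟨some j, rfl⟩) hz
        exact AddSubgroup.add_mem _ (AddSubgroup.nsmul_mem _ h1 q) h2
      · have heq : ((h : G) + z) - (q • y₂ + z) = p • y₁ := by
          rw [hpq]; abel
        rw [heq, smul_comm, hy₁tor, smul_zero]
    have hcard := key_aux hℓ θ hsurj n₁ hker c hT
    rw [Fintype.card_fin, Fintype.card_option, Fintype.card_fin] at hcard
    omega
  · -- m₁ ≤ n₂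
    by_contra hcon
    push_neg at hcon
    have hmi : ∀ j : Fin (r - 1), n₂ < m ⟨j.val + 1, by omega⟩ := by
      intro j
      refine lt_of_lt_of_le hcon (hm ?_)
      simp [Fin.le_def]
    let θ : G →+ (Fin (r - 1) → ZMod ℓ) := AddMonoidHom.mk'
      (fun x j => ZMod.castHom (dvd_pow_self ℓ (lt_of_le_of_lt
        (Nat.zero_le n₂) (hmi j)).ne') (ZMod ℓ) (eG x ⟨j.val + 1, by omega⟩))
      (by intro a b; funext j; simp only [map_add, Pi.add_apply])
    have hθ : ∀ (x : G) (j : Fin (r - 1)),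
        θ x j = ((((eG x ⟨j.val + 1, by omega⟩).val : ℕ)) : ZMod ℓ) := by
      intro x j
      haveI : NeZero (ℓ ^ m ⟨j.val + 1, by omega⟩) := ⟨pow_ne_zero _ hℓ.ne_zero⟩
      show ZMod.castHom (dvd_pow_self ℓ (lt_of_le_of_lt
        (Nat.zero_le n₂) (hmi j)).ne') (ZMod ℓ) (eG x ⟨j.val + 1, by omega⟩) = _
      rw [ZMod.castHom_apply]
      exact (ZMod.natCast_val _).symm
    have hsurj : Function.Surjective θ := by
      intro v
      refine ⟨eG.symm (fun i => if hi : 0 < i.val then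
        (((v ⟨i.val - 1, by omega⟩).val : ℕ) : ZMod (ℓ ^ m i)) else 0), ?_⟩
      funext j
      haveI : NeZero (ℓ ^ m ⟨j.val + 1, by omega⟩) := ⟨pow_ne_zero _ hℓ.ne_zero⟩
      rw [hθ, AddEquiv.apply_symm_apply]
      rw [dif_pos (Nat.succ_pos j.val)]
      have hje : (⟨j.val + 1 - 1, by omega⟩ : Fin (r - 1)) = j := by
        apply Fin.ext; simp
      rw [hje]
      have hlt : (v j).val < ℓ ^ m ⟨j.val + 1, by omega⟩ := lt_of_lt_of_le (ZMod.val_lt _)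
        (by calc ℓ = ℓ ^ 1 := (pow_one ℓ).symm
            _ ≤ ℓ ^ m ⟨j.val + 1, by omega⟩ :=
              Nat.pow_le_pow_right hℓ.pos (by have := hmi j; omega))
      rw [ZMod.val_natCast_of_lt hlt]
      exact ZMod.natCast_zmod_val (v j)
    have hker : ∀ u : G, ℓ ^ n₂ • u = 0 → θ u = 0 := by
      intro u hu
      funext j
      have h1 : ℓ ^ n₂ • (eG u ⟨j.val + 1, by omega⟩) = 0 := by
        have := congrArg (fun t => eG t (⟨j.val + 1, by omega⟩ : Fin r)) hu
        simpa [map_nsmul] using this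
      rw [hθ]
      exact zmod_cast_eq_zero_of_smul hℓ (hmi j) _ h1
    have hT : ∀ x : G, ∃ x' ∈ AddSubgroup.closure (Set.range g),
        ℓ ^ n₂ • (x - x') = 0 := by
      intro x
      obtain ⟨h, z, hz, rfl⟩ := hdecomp x
      refine ⟨z, hz, ?_⟩
      rw [add_sub_cancel_right]
      exact hHtor h
    have hcard := key_aux hℓ θ hsurj n₂ hker g hT
    rw [Fintype.card_fin, Fintype.card_fin] at hcard
    omega
end
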